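/- arXiv:1809.03797 — 3 statements merged into one kernel-verified Lean document; each statement's English description precedes it below -/
import Mathlib

section
/- For every kernel U on [0,1]² with ‖U‖_∞ ≤ 1 and every integer k ≥ 2, the cycle homomorphism densities satisfy t(C_{2k}, U) ≥ t(C_4, U)^{2^{k−2}}. -/
open MeasureTheory

attribute [local instance] Classical.propDecidable

noncomputable section

/-- The unit interval `[0,1]`, equipped with the (restricted) Lebesgue measure. -/
abbrev UI : Type := Set.Icc (0:ℝ) 1

/-- A graphon: a symmetric measurable function `[0,1]² → [0,1]`. -/
def IsGraphon (W : UI → UI → ℝ) : Prop :=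
  Measurable (Function.uncurry W) ∧ (∀ x y, W x y = W y x) ∧
    ∀ x y, W x y ∈ Set.Icc (0:ℝ) 1

/-- A kernel: a bounded symmetric measurable function `[0,1]² → ℝ`. -/
def IsKernel (W : UI → UI → ℝ) : Prop :=
  Measurable (Function.uncurry W) ∧ (∀ x y, W x y = W y x) ∧
    ∃ C : ℝ, ∀ x y, |W x y| ≤ C

/-- The cut norm `‖W‖_□`. -/
def cutNorm (W : UI → UI → ℝ) : ℝ :=
  sSup { r : ℝ | ∃ S T : Set UI, MeasurableSet S ∧ MeasurableSet T ∧
    r = |∫ x in S, ∫ y in T, W x y| }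

/-- A measure preserving bijection of `[0,1]`. -/
structure MPB where
  toFun : UI → UI
  bijective : Function.Bijective toFun
  measurePreserving : MeasurePreserving toFun

/-- The version `W^φ` of `W`. -/
def vers (W : UI → UI → ℝ) (φ : UI → UI) : UI → UI → ℝ := fun x y => W (φ x) (φ y)

/-- The cut distance `δ_□(U,W)`. -/
def cutDist (U W : UI → UI → ℝ) : ℝ :=
  ⨅ φ : MPB, cutNorm (fun x y => U x y - vers W φ.toFun x y)

/-- Weak* convergence of a sequence of (bounded measurable) functions on `[0,1]²`:
convergence of integrals over all products of measurable sets. -/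
def WeakStarTendsto (Wn : ℕ → UI → UI → ℝ) (W : UI → UI → ℝ) : Prop :=
  ∀ S T : Set UI, MeasurableSet S → MeasurableSet T →
    Filter.Tendsto (fun n => ∫ x in S, ∫ y in T, Wn n x y) Filter.atTop
      (nhds (∫ x in S, ∫ y in T, W x y))

/-- The envelope `⟨W⟩`: the set of graphons arising as weak* limits of versions of `W`. -/
def envelope (W : UI → UI → ℝ) : Set (UI → UI → ℝ) :=
  { U | IsGraphon U ∧ ∃ π : ℕ → MPB, WeakStarTendsto (fun n => vers W (π n).toFun) U }

/-- The `L¹` distance on `[0,1]²`. -/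
def L1dist (U V : UI → UI → ℝ) : ℝ :=
  ∫ x : UI, ∫ y : UI, |U x y - V x y|

/-- The homomorphism density of the `m`-cycle `C_m` in `W`. -/
def cycleDensity (m : ℕ) (W : UI → UI → ℝ) : ℝ :=
  ∫ x : Fin m → UI, ∏ i, W (x i) (x (finRotate m i))

/-- The homomorphism density `t(H,W)` of a finite simple graph `H` on `{0,…,n-1}` in `W`. -/
def homDensity {n : ℕ} (G : SimpleGraph (Fin n)) [DecidableRel G.Adj]
    (W : UI → UI → ℝ) : ℝ :=
  ∫ x : Fin n → UI, ∏ p : Fin n × Fin n,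
    if p.1 < p.2 ∧ G.Adj p.1 p.2 then W (x p.1) (x p.2) else 1

/-- The decorated homomorphism density `t(H,w)` where each edge `{i,j}` of `H` carries the
function `w i j`. -/
def homDensityDecorated {n : ℕ} (G : SimpleGraph (Fin n)) [DecidableRel G.Adj]
    (w : Fin n → Fin n → UI → UI → ℝ) : ℝ :=
  ∫ x : Fin n → UI, ∏ p : Fin n × Fin n,
    if p.1 < p.2 ∧ G.Adj p.1 p.2 then w p.1 p.2 (x p.1) (x p.2) else 1

/-- The number of edges `e(H)`. -/
def edgeCount {n : ℕ} (G : SimpleGraph (Fin n)) [DecidableRel G.Adj] : ℕ :=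
  G.edgeFinset.card

/-- The average of `W` over `A × B` (zero if `A` or `B` is a null set). -/
def stepAvg (W : UI → UI → ℝ) (A B : Set UI) : ℝ :=
  (∫ x in A, ∫ y in B, W x y) / ((volume A).toReal * (volume B).toReal)

/-- The stepping `W^{⋈P}` of `W` with respect to the finite partition of `[0,1]` given by the
fibers of the colouring `P : [0,1] → κ`. -/
def stepping {κ : Type*} (W : UI → UI → ℝ) (P : UI → κ) : UI → UI → ℝ :=
  fun x y => stepAvg W (P ⁻¹' {P x}) (P ⁻¹' {P y})

/-- A finite measurable partition of `[0,1]`, presented as a colouring with finitely many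
colours, all of whose fibers are measurable. -/
def IsFinitePartition {κ : Type*} (P : UI → κ) : Prop :=
  Finite κ ∧ ∀ c : κ, MeasurableSet (P ⁻¹' {c})

/-- A graphon parameter: a real-valued function on graphons invariant under cut distance `0`. -/
def GraphonParam (θ : (UI → UI → ℝ) → ℝ) : Prop :=
  ∀ U W, IsGraphon U → IsGraphon W → cutDist U W = 0 → θ U = θ W

/-- The structuredness order: `U ⪯ W` iff `⟨U⟩ ⊆ ⟨W⟩`. -/
def structLE (U W : UI → UI → ℝ) : Prop := envelope U ⊆ envelope W

/-- The strict structuredness order: `U ≺ W`. -/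
def structLT (U W : UI → UI → ℝ) : Prop :=
  envelope U ⊆ envelope W ∧ ¬ envelope W ⊆ envelope U

/-- A cut distance compatible graphon parameter. -/
def CutDistCompatible (θ : (UI → UI → ℝ) → ℝ) : Prop :=
  ∀ U W, IsGraphon U → IsGraphon W → structLE U W → θ U ≤ θ W

/-- A cut distance identifying graphon parameter. -/
def CutDistIdentifying (θ : (UI → UI → ℝ) → ℝ) : Prop :=
  ∀ U W, IsGraphon U → IsGraphon W → structLT U W → θ U < θ W

/-- `θ` is continuous with respect to the `L¹` norm on graphons. -/
def L1Continuous (θ : (UI → UI → ℝ) → ℝ) : Prop :=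
  ∀ W, IsGraphon W → ∀ ε : ℝ, 0 < ε → ∃ δ : ℝ, 0 < δ ∧
    ∀ U, IsGraphon U → L1dist U W < δ → |θ U - θ W| < ε

/-- `θ` is continuous with respect to the cut distance. -/
def CutDistContinuous (θ : (UI → UI → ℝ) → ℝ) : Prop :=
  ∀ (Wn : ℕ → UI → UI → ℝ) (W : UI → UI → ℝ), (∀ n, IsGraphon (Wn n)) → IsGraphon W →
    Filter.Tendsto (fun n => cutDist (Wn n) W) Filter.atTop (nhds 0) →
    Filter.Tendsto (fun n => θ (Wn n)) Filter.atTop (nhds (θ W))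

/-- `H` is seminorming: `W ↦ |t(H,W)|^{1/e(H)}` is a seminorm on the space of kernels. -/
def IsSeminorming {n : ℕ} (G : SimpleGraph (Fin n)) [DecidableRel G.Adj] : Prop :=
  0 < edgeCount G ∧
  (∀ W₁ W₂ : UI → UI → ℝ, IsKernel W₁ → IsKernel W₂ →
    |homDensity G (fun x y => W₁ x y + W₂ x y)| ^ ((edgeCount G : ℝ)⁻¹) ≤
      |homDensity G W₁| ^ ((edgeCount G : ℝ)⁻¹) + |homDensity G W₂| ^ ((edgeCount G : ℝ)⁻¹)) ∧
  (∀ (c : ℝ) (W : UI → UI → ℝ), IsKernel W →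
    |homDensity G (fun x y => c * W x y)| ^ ((edgeCount G : ℝ)⁻¹) =
      |c| * |homDensity G W| ^ ((edgeCount G : ℝ)⁻¹))


namespace CycAux
open Function

variable {U : UI → UI → ℝ}

/-- iterated kernel: `P U n` is the kernel of the (n+1)-st power of the operator. -/
def P (U : UI → UI → ℝ) : ℕ → UI → UI → ℝ
  | 0 => U
  | n + 1 => fun x y => ∫ z, P U n x z * U z y

variable {U : UI → UI → ℝ}

lemma integrable_of_bdd {α : Type*} [MeasureSpace α]
    [IsFiniteMeasure (volume : Measure α)] {f : α → ℝ} (hf : Measurable f)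
    {C : ℝ} (hb : ∀ x, |f x| ≤ C) : Integrable f :=
  (integrable_const C).mono' hf.aestronglyMeasurable
    (Filter.Eventually.of_forall fun x => by simpa using hb x)

lemma Pmeas (hm : Measurable (uncurry U)) : ∀ n, Measurable (uncurry (P U n))
  | 0 => hm
  | n + 1 => by
    have h : Measurable fun q : (UI × UI) × UI => P U n q.1.1 q.2 * U q.2 q.1.2 := by
      have h1 : Measurable fun q : (UI × UI) × UI => P U n q.1.1 q.2 :=
        (Pmeas hm n).comp (measurable_fst.fst.prodMk measurable_snd)
      have h2 : Measurable fun q : (UI × UI) × UI => U q.2 q.1.2 :=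
        hm.comp (measurable_snd.prodMk measurable_fst.snd)
      exact h1.mul h2
    exact (h.stronglyMeasurable.integral_prod_right').measurable

lemma Pbound (hb : ∀ x y, |U x y| ≤ 1) : ∀ n x y, |P U n x y| ≤ 1
  | 0, x, y => hb x y
  | n + 1, x, y => by
    have : ∀ᵐ z : UI, ‖P U n x z * U z y‖ ≤ 1 := by
      refine Filter.Eventually.of_forall fun z => ?_
      rw [Real.norm_eq_abs, abs_mul]
      exact mul_le_one₀ (Pbound hb n x z) (abs_nonneg _) (hb z y)
    have := norm_integral_le_of_norm_le_const (f := fun z : UI => P U n x z * U z y) this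
    simpa [P] using this

lemma Pint1 (hm : Measurable (uncurry U)) (hb : ∀ x y, |U x y| ≤ 1) (n : ℕ) (x : UI) :
    Integrable (fun y => P U n x y) :=
  integrable_of_bdd ((Pmeas hm n).comp (measurable_const.prodMk measurable_id))
    (fun z => Pbound hb n x z)

lemma comp (hm : Measurable (Function.uncurry U)) (hb : ∀ x y, |U x y| ≤ 1) :
    ∀ (b a : ℕ) (x y : UI), P U (a + b + 1) x y = ∫ z, P U a x z * P U b z y
  | 0, a, x, y => rfl
  | b + 1, a, x, y => by
    have key : P U (a + (b+1) + 1) x y = ∫ z, (∫ w, P U a x w * P U b w z) * U z y := by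
      show (∫ z, P U (a + b + 1) x z * U z y) = _
      congr 1; funext z; rw [comp hm hb b a x z]
    rw [key]
    have h1 : ∀ z : UI, (∫ w, P U a x w * P U b w z) * U z y
        = ∫ w, P U a x w * P U b w z * U z y := fun z => (integral_mul_const _ _).symm
    simp_rw [h1]
    have hint : Integrable (uncurry fun z w => P U a x w * P U b w z * U z y) := by
      apply integrable_of_bdd (C := 1)
      · exact (((Pmeas hm a).comp (measurable_const.prodMk measurable_snd)).mul
          ((Pmeas hm b).comp (measurable_snd.prodMk measurable_fst))).mul
          (hm.comp (measurable_fst.prodMk measurable_const))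
      · rintro ⟨z, w⟩
        simp only [uncurry, abs_mul]
        exact mul_le_one₀ (mul_le_one₀ (Pbound hb a x w) (abs_nonneg _) (Pbound hb b w z))
          (by positivity) (hb z y)
    rw [integral_integral_swap hint]
    show (∫ w, ∫ z, P U a x w * P U b w z * U z y) = ∫ w, P U a x w * P U (b+1) w y
    congr 1; funext w
    show _ = P U a x w * ∫ z, P U b w z * U z y
    rw [← integral_const_mul]
    congr 1; funext z; ring

lemma integral_snoc (m : ℕ) (g : (Fin (m + 1) → UI) → ℝ) (hg : Measurable g)
    (hb : ∀ x, |g x| ≤ 1) :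
    ∫ x : Fin (m + 1) → UI, g x = ∫ z : UI, ∫ x : Fin m → UI, g (Fin.snoc x z) := by
  have mp := measurePreserving_piFinSuccAbove (fun _ : Fin (m+1) => (volume : Measure UI))
    (Fin.last m)
  set e := MeasurableEquiv.piFinSuccAbove (fun _ : Fin (m+1) => UI) (Fin.last m) with he
  have h1 : ∫ x : Fin (m + 1) → UI, g x
      = ∫ p : UI × (Fin m → UI), g (e.symm p)
        ∂((volume : Measure UI).prod (Measure.pi fun _ : Fin m => volume)) := by
    rw [volume_pi]
    have := mp.integral_comp e.measurableEmbedding (fun p => g (e.symm p))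
    simp only [MeasurableEquiv.symm_apply_apply] at this
    exact this
  rw [h1]
  have hpi : (Measure.pi fun _ : Fin m => (volume : Measure UI)) = volume := volume_pi.symm
  rw [hpi]
  have hint : Integrable (fun p : UI × (Fin m → UI) => g (e.symm p))
      ((volume : Measure UI).prod volume) := by
    have : Integrable (fun p : UI × (Fin m → UI) => g (e.symm p)) volume :=
      integrable_of_bdd (hg.comp e.symm.measurable) (fun p => hb _)
    rwa [Measure.volume_eq_prod] at this
  rw [integral_prod _ hint]
  congr 1; funext z; congr 1; funext x
  congr 1
  show e.symm (z, x) = Fin.snoc x z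
  rw [MeasurableEquiv.piFinSuccAbove_symm_apply]
  simp [Fin.insertNthEquiv, Fin.insertNth_last']

lemma integral_fin_one (g : (Fin 1 → UI) → ℝ) :
    ∫ x : Fin 1 → UI, g x = ∫ a : UI, g (fun _ => a) := by
  have mp := measurePreserving_funUnique (volume : Measure UI) (Fin 1)
  have := mp.integral_comp (MeasurableEquiv.funUnique (Fin 1) UI).measurableEmbedding
    (fun a => g (fun _ => a))
  rw [volume_pi]
  rw [← this]
  congr 1; funext x; congr 1; funext i
  congr 1
  exact (Subsingleton.elim _ _)

lemma chain_meas (hm : Measurable (uncurry U)) {n : ℕ} {F : UI → UI → ℝ}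
    (hF : Measurable (uncurry F)) :
    Measurable (fun x : Fin (n + 2) → UI =>
      (∏ i : Fin (n + 1), U (x i.castSucc) (x i.succ)) * F (x 0) (x (Fin.last (n + 1)))) := by
  refine Measurable.mul ?_ ?_
  · exact Finset.measurable_prod _ fun i _ =>
      Measurable.comp (f := fun x : Fin (n+2) → UI => (x i.castSucc, x i.succ)) hm
        ((measurable_pi_apply i.castSucc).prodMk (measurable_pi_apply i.succ))
  · exact Measurable.comp (f := fun x : Fin (n+2) → UI => (x 0, x (Fin.last (n+1)))) hF
      ((measurable_pi_apply 0).prodMk (measurable_pi_apply (Fin.last (n+1))))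

lemma chain_bdd (hb : ∀ x y, |U x y| ≤ 1) {n : ℕ} {F : UI → UI → ℝ}
    (hFb : ∀ a b, |F a b| ≤ 1) (x : Fin (n + 2) → UI) :
    |(∏ i : Fin (n + 1), U (x i.castSucc) (x i.succ)) * F (x 0) (x (Fin.last (n + 1)))| ≤ 1 := by
  rw [abs_mul, Finset.abs_prod]
  refine mul_le_one₀ (Finset.prod_le_one (fun i _ => abs_nonneg _) (fun i _ => hb _ _))
    (by positivity) (hFb _ _)

lemma chain (hm : Measurable (uncurry U)) (hb : ∀ x y, |U x y| ≤ 1) :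
    ∀ (n : ℕ) (F : UI → UI → ℝ), Measurable (uncurry F) → (∀ a b, |F a b| ≤ 1) →
    (∫ x : Fin (n + 2) → UI,
        (∏ i : Fin (n + 1), U (x i.castSucc) (x i.succ)) * F (x 0) (x (Fin.last (n + 1))))
      = ∫ a, ∫ b, P U n a b * F a b
  | 0, F, hF, hFb => by
    rw [integral_snoc 1 _ (chain_meas hm hF) (chain_bdd hb hFb)]
    have h1 : ∀ (z : UI) (x : Fin 1 → UI),
        (∏ i : Fin 1, U ((Fin.snoc x z : Fin 2 → UI) i.castSucc)
            ((Fin.snoc x z : Fin 2 → UI) i.succ)) *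
          F ((Fin.snoc x z : Fin 2 → UI) 0) ((Fin.snoc x z : Fin 2 → UI) (Fin.last 1))
          = U (x 0) z * F (x 0) z := by
      intro z x
      rw [Fin.prod_univ_one]
      have e0 : (Fin.snoc x z : Fin 2 → UI) 0 = x 0 := by
        rw [show (0 : Fin 2) = (0 : Fin 1).castSucc from rfl, Fin.snoc_castSucc]
      have e1 : (Fin.snoc x z : Fin 2 → UI) 1 = z := by
        rw [show (1 : Fin 2) = Fin.last 1 from rfl, Fin.snoc_last]
      have c0 : (0 : Fin 1).castSucc = 0 := rfl
      have s0 : (0 : Fin 1).succ = 1 := rfl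
      rw [c0, s0, e0, e1]
      rfl
    simp_rw [h1]
    simp_rw [integral_fin_one (fun x : Fin 1 → UI => U (x 0) _ * F (x 0) _)]
    have hint : Integrable (uncurry fun z a => U a z * F a z) := by
      refine integrable_of_bdd (C := 1) ?_ ?_
      · exact (hm.comp (measurable_snd.prodMk measurable_fst)).mul
          (hF.comp (measurable_snd.prodMk measurable_fst))
      · rintro ⟨z, a⟩
        simp only [uncurry, abs_mul]
        exact mul_le_one₀ (hb a z) (abs_nonneg _) (hFb a z)
    rw [integral_integral_swap hint]
    rfl
  | n + 1, F, hF, hFb => by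
    rw [integral_snoc (n + 2) _ (chain_meas hm hF) (chain_bdd hb hFb)]
    have h1 : ∀ (z : UI) (x : Fin (n + 2) → UI),
        (∏ i : Fin (n + 2), U ((Fin.snoc x z : Fin (n+3) → UI) i.castSucc)
            ((Fin.snoc x z : Fin (n+3) → UI) i.succ)) *
          F ((Fin.snoc x z : Fin (n+3) → UI) 0)
            ((Fin.snoc x z : Fin (n+3) → UI) (Fin.last (n + 2)))
        = (∏ i : Fin (n + 1), U (x i.castSucc) (x i.succ)) *
            (U (x (Fin.last (n + 1))) z * F (x 0) z) := by
      intro z x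
      rw [Fin.prod_univ_castSucc]
      have e0 : (Fin.snoc x z : Fin (n+3) → UI) 0 = x 0 := by
        rw [show (0 : Fin (n+3)) = (0 : Fin (n+2)).castSucc from rfl, Fin.snoc_castSucc]
      have elast : (Fin.snoc x z : Fin (n+3) → UI) (Fin.last (n+2)) = z := Fin.snoc_last _ _
      have efac : ∀ j : Fin (n + 1),
          U ((Fin.snoc x z : Fin (n+3) → UI) j.castSucc.castSucc)
            ((Fin.snoc x z : Fin (n+3) → UI) j.castSucc.succ)
          = U (x j.castSucc) (x j.succ) := by
        intro j
        rw [Fin.snoc_castSucc, Fin.succ_castSucc, Fin.snoc_castSucc]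
      have elastfac : U ((Fin.snoc x z : Fin (n+3) → UI) (Fin.last (n+1)).castSucc)
            ((Fin.snoc x z : Fin (n+3) → UI) (Fin.last (n+1)).succ)
          = U (x (Fin.last (n+1))) z := by
        rw [Fin.snoc_castSucc, Fin.succ_last, Fin.snoc_last]
      simp_rw [efac, elastfac, e0, elast]
      ring
    simp_rw [h1]
    have h2 : ∀ z : UI,
        (∫ x : Fin (n + 2) → UI, (∏ i : Fin (n + 1), U (x i.castSucc) (x i.succ)) *
          (U (x (Fin.last (n + 1))) z * F (x 0) z))
        = ∫ a, ∫ b, P U n a b * (U b z * F a z) := by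
      intro z
      exact chain hm hb n (fun a b => U b z * F a z)
        ((hm.comp (measurable_snd.prodMk measurable_const)).mul
          (hF.comp (measurable_fst.prodMk measurable_const)))
        (fun a b => by
          rw [abs_mul]; exact mul_le_one₀ (hb b z) (abs_nonneg _) (hFb a z))
    simp_rw [h2]
    -- swap z and a
    have hmeas_g : Measurable (uncurry fun z a => ∫ b, P U n a b * (U b z * F a z)) := by
      have hin : Measurable fun q : (UI × UI) × UI =>
          P U n q.1.2 q.2 * (U q.2 q.1.1 * F q.1.2 q.1.1) := by
        exact ((Pmeas hm n).comp (measurable_fst.snd.prodMk measurable_snd)).mul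
          (((hm.comp (measurable_snd.prodMk measurable_fst.fst))).mul
            (hF.comp (measurable_fst.snd.prodMk measurable_fst.fst)))
      exact hin.stronglyMeasurable.integral_prod_right'.measurable
    have hbdd_g : ∀ p : UI × UI, |∫ b, P U n p.2 b * (U b p.1 * F p.2 p.1)| ≤ 1 := by
      rintro ⟨z, a⟩
      have : ∀ᵐ b : UI, ‖P U n a b * (U b z * F a z)‖ ≤ 1 :=
        Filter.Eventually.of_forall fun b => by
          rw [Real.norm_eq_abs, abs_mul]
          exact mul_le_one₀ (Pbound hb n a b) (abs_nonneg _)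
            (by rw [abs_mul]; exact mul_le_one₀ (hb b z) (abs_nonneg _) (hFb a z))
      simpa using norm_integral_le_of_norm_le_const this
    have hint : Integrable (uncurry fun z a => ∫ b, P U n a b * (U b z * F a z)) :=
      integrable_of_bdd (C := 1) hmeas_g (fun p => hbdd_g p)
    rw [integral_integral_swap hint]
    congr 1; funext a
    have h3 : ∀ z : UI, (∫ b, P U n a b * (U b z * F a z))
        = (∫ b, P U n a b * U b z) * F a z := by
      intro z
      rw [← integral_mul_const]
      congr 1; funext b; ring
    simp_rw [h3]
    rfl

lemma Psymm (hm : Measurable (uncurry U)) (hb : ∀ x y, |U x y| ≤ 1)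
    (hs : ∀ x y, U x y = U y x) : ∀ (n : ℕ) (x y : UI), P U n x y = P U n y x
  | 0, x, y => hs x y
  | n + 1, x, y => by
    have h1 : P U (n + 1) y x = ∫ z, P U 0 y z * P U n z x := by
      have := comp hm hb n 0 y x
      simpa using this
    rw [h1]
    show P U (n+1) x y = ∫ z, U y z * P U n z x
    have h2 : ∀ z : UI, U y z * P U n z x = P U n x z * U z y := by
      intro z
      rw [hs y z, Psymm hm hb hs n z x, mul_comm]
    simp_rw [h2]
    rfl

lemma traceFormula (hm : Measurable (uncurry U)) (hb : ∀ x y, |U x y| ≤ 1) (n : ℕ) :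
    cycleDensity (n + 2) U = ∫ a, P U (n + 1) a a := by
  unfold cycleDensity
  have h1 : ∀ x : Fin (n + 2) → UI,
      (∏ i, U (x i) (x (finRotate (n + 2) i)))
      = (∏ i : Fin (n + 1), U (x i.castSucc) (x i.succ)) *
          (fun a b => U b a) (x 0) (x (Fin.last (n + 1))) := by
    intro x
    rw [Fin.prod_univ_castSucc, finRotate_last]
    congr 1
    refine Finset.prod_congr rfl fun i _ => ?_
    rw [finRotate_succ_apply, Fin.coeSucc_eq_succ]
  simp_rw [h1]
  rw [chain hm hb n (fun a b => U b a)
    (hm.comp (measurable_snd.prodMk measurable_fst))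
    (fun a b => hb b a)]
  congr 1

lemma doubleProd (hm : Measurable (uncurry U)) (hb : ∀ x y, |U x y| ≤ 1)
    (hs : ∀ x y, U x y = U y x) (a b : ℕ) :
    (∫ x, ∫ y, P U a x y * P U b x y) = ∫ x, P U (a + b + 1) x x := by
  congr 1; funext x
  rw [comp hm hb b a x x]
  congr 1; funext y
  rw [Psymm hm hb hs b y x]

lemma cycle_eq (hm : Measurable (uncurry U)) (hb : ∀ x y, |U x y| ≤ 1)
    (hs : ∀ x y, U x y = U y x) (a b : ℕ) :
    cycleDensity (a + b + 2) U = ∫ x, ∫ y, P U a x y * P U b x y := by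
  rw [doubleProd hm hb hs a b]
  have := traceFormula hm hb (a + b)
  rw [show a + b + 2 = (a + b) + 2 from rfl] at this ⊢
  rw [this]

lemma iter_eq_prod {h : UI → UI → ℝ} (hm : Measurable (uncurry h))
    (hb : ∀ x y, |h x y| ≤ 1) :
    (∫ x, ∫ y, h x y) = ∫ p : UI × UI, h p.1 p.2 := by
  have hint : Integrable (fun p : UI × UI => h p.1 p.2)
      ((volume : Measure UI).prod (volume : Measure UI)) := by
    have : Integrable (fun p : UI × UI => h p.1 p.2) volume :=
      integrable_of_bdd (C := 1) hm (fun p => hb p.1 p.2)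
    rwa [Measure.volume_eq_prod] at this
  rw [show (volume : Measure (UI × UI)) = (volume : Measure UI).prod volume from
    Measure.volume_eq_prod _ _, integral_prod _ hint]

lemma cs_integral {f g : UI × UI → ℝ} (hfm : Measurable f) (hgm : Measurable g)
    (hfb : ∀ p, |f p| ≤ 1) (hgb : ∀ p, |g p| ≤ 1) :
    (∫ p, f p * g p) ^ 2 ≤ (∫ p, f p * f p) * ∫ p, g p * g p := by
  set A := ∫ p, f p * f p with hA
  set B := ∫ p, f p * g p with hB
  set C := ∫ p, g p * g p with hC
  have hff : Integrable (fun p => f p * f p) :=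
    integrable_of_bdd (C := 1) (hfm.mul hfm) fun p => by
      rw [abs_mul]; exact mul_le_one₀ (hfb p) (abs_nonneg _) (hfb p)
  have hfg : Integrable (fun p => f p * g p) :=
    integrable_of_bdd (C := 1) (hfm.mul hgm) fun p => by
      rw [abs_mul]; exact mul_le_one₀ (hfb p) (abs_nonneg _) (hgb p)
  have hgg : Integrable (fun p => g p * g p) :=
    integrable_of_bdd (C := 1) (hgm.mul hgm) fun p => by
      rw [abs_mul]; exact mul_le_one₀ (hgb p) (abs_nonneg _) (hgb p)
  have key : ∀ t : ℝ, 0 ≤ A * (t * t) + (2 * B) * t + C := by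
    intro t
    have h0 : 0 ≤ ∫ p, (t * f p + g p) * (t * f p + g p) :=
      integral_nonneg fun p => mul_self_nonneg _
    have hexp : (∫ p, (t * f p + g p) * (t * f p + g p))
        = A * (t * t) + (2 * B) * t + C := by
      have : ∀ p : UI × UI, (t * f p + g p) * (t * f p + g p)
          = (t * t) * (f p * f p) + (2 * t) * (f p * g p) + g p * g p := fun p => by ring
      simp_rw [this]
      have i1 : Integrable (fun p => t * t * (f p * f p)) := hff.const_mul (t*t)
      have i2 : Integrable (fun p => 2 * t * (f p * g p)) := hfg.const_mul (2*t)
      have i12 : Integrable (fun p => t * t * (f p * f p) + 2 * t * (f p * g p)) := i1.add i2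
      rw [integral_add i12 hgg, integral_add i1 i2, integral_const_mul, integral_const_mul]
      ring
    rw [hexp] at h0; exact h0
  have hd := discrim_le_zero key
  rw [discrim] at hd
  nlinarith [hd]

lemma cycle_nonneg (hm : Measurable (uncurry U)) (hb : ∀ x y, |U x y| ≤ 1)
    (hs : ∀ x y, U x y = U y x) (j : ℕ) :
    0 ≤ cycleDensity (j + j + 2) U := by
  rw [cycle_eq hm hb hs j j]
  exact integral_nonneg fun x => integral_nonneg fun y => mul_self_nonneg _

lemma cycle_le_one (hm : Measurable (uncurry U)) (hb : ∀ x y, |U x y| ≤ 1)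
    (hs : ∀ x y, U x y = U y x) (j : ℕ) :
    cycleDensity (j + j + 2) U ≤ 1 := by
  rw [cycle_eq hm hb hs j j]
  have inner_le : ∀ x : UI, |∫ y, P U j x y * P U j x y| ≤ 1 := by
    intro x
    have : ∀ᵐ y : UI, ‖P U j x y * P U j x y‖ ≤ 1 :=
      Filter.Eventually.of_forall fun y => by
        rw [Real.norm_eq_abs, abs_mul]
        exact mul_le_one₀ (Pbound hb j x y) (abs_nonneg _) (Pbound hb j x y)
    simpa using norm_integral_le_of_norm_le_const this
  have : ∀ᵐ x : UI, ‖∫ y, P U j x y * P U j x y‖ ≤ 1 :=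
    Filter.Eventually.of_forall fun x => by
      rw [Real.norm_eq_abs]; exact inner_le x
  have h := norm_integral_le_of_norm_le_const this
  simp at h
  exact le_trans (le_abs_self _) (by simpa using h)

lemma cycle_step (hm : Measurable (uncurry U)) (hb : ∀ x y, |U x y| ≤ 1)
    (hs : ∀ x y, U x y = U y x) (j : ℕ) :
    cycleDensity (2 * (j + 2)) U ^ 2 ≤ cycleDensity (2 * (j + 3)) U := by
  have e1 : cycleDensity (2 * (j + 2)) U = ∫ x, ∫ y, P U j x y * P U (j + 2) x y := by
    rw [show 2 * (j + 2) = j + (j + 2) + 2 by ring]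
    exact cycle_eq hm hb hs j (j + 2)
  have e2 : cycleDensity (2 * (j + 1)) U = ∫ x, ∫ y, P U j x y * P U j x y := by
    rw [show 2 * (j + 1) = j + j + 2 by ring]
    exact cycle_eq hm hb hs j j
  have e3 : cycleDensity (2 * (j + 3)) U
      = ∫ x, ∫ y, P U (j + 2) x y * P U (j + 2) x y := by
    rw [show 2 * (j + 3) = (j + 2) + (j + 2) + 2 by ring]
    exact cycle_eq hm hb hs (j + 2) (j + 2)
  -- convert to product integrals and apply Cauchy-Schwarz
  have hf := Pmeas hm j
  have hg := Pmeas hm (j + 2)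
  have hmul : ∀ (a b : ℕ), Measurable (uncurry fun x y => P U a x y * P U b x y) :=
    fun a b => (Pmeas hm a).mul (Pmeas hm b)
  have hmb : ∀ (a b : ℕ) (x y : UI), |P U a x y * P U b x y| ≤ 1 := fun a b x y => by
    rw [abs_mul]; exact mul_le_one₀ (Pbound hb a x y) (abs_nonneg _) (Pbound hb b x y)
  have p1 : (∫ x, ∫ y, P U j x y * P U (j+2) x y)
      = ∫ p : UI × UI, P U j p.1 p.2 * P U (j+2) p.1 p.2 :=
    iter_eq_prod (hmul j (j+2)) (hmb j (j+2))
  have p2 : (∫ x, ∫ y, P U j x y * P U j x y)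
      = ∫ p : UI × UI, P U j p.1 p.2 * P U j p.1 p.2 :=
    iter_eq_prod (hmul j j) (hmb j j)
  have p3 : (∫ x, ∫ y, P U (j+2) x y * P U (j+2) x y)
      = ∫ p : UI × UI, P U (j+2) p.1 p.2 * P U (j+2) p.1 p.2 :=
    iter_eq_prod (hmul (j+2) (j+2)) (hmb (j+2) (j+2))
  have cs := cs_integral (f := fun p : UI × UI => P U j p.1 p.2)
    (g := fun p : UI × UI => P U (j+2) p.1 p.2)
    (hf.comp (measurable_fst.prodMk measurable_snd))
    (hg.comp (measurable_fst.prodMk measurable_snd))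
    (fun p => Pbound hb j p.1 p.2) (fun p => Pbound hb (j+2) p.1 p.2)
  have h1 : cycleDensity (2 * (j + 2)) U ^ 2
      ≤ cycleDensity (2 * (j + 1)) U * cycleDensity (2 * (j + 3)) U := by
    rw [e1, e2, e3, p1, p2, p3]; exact cs
  have h2 : cycleDensity (2 * (j + 1)) U ≤ 1 := by
    have := cycle_le_one hm hb hs j
    rwa [show j + j + 2 = 2 * (j + 1) by ring] at this
  have h3 : 0 ≤ cycleDensity (2 * (j + 3)) U := by
    have := cycle_nonneg hm hb hs (j + 2)
    rwa [show (j+2) + (j+2) + 2 = 2 * (j + 3) by ring] at this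
  nlinarith [h1, h2, h3]

lemma cycle_main (hm : Measurable (uncurry U)) (hb : ∀ x y, |U x y| ≤ 1)
    (hs : ∀ x y, U x y = U y x) :
    ∀ j : ℕ, cycleDensity 4 U ^ 2 ^ j ≤ cycleDensity (2 * (j + 2)) U
  | 0 => by norm_num
  | j + 1 => by
    have ih := cycle_main hm hb hs j
    have hnn : 0 ≤ cycleDensity 4 U ^ 2 ^ j := by
      have h4 : 0 ≤ cycleDensity 4 U := by
        have := cycle_nonneg hm hb hs 1
        norm_num at this; exact this
      positivity
    calc cycleDensity 4 U ^ 2 ^ (j + 1)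
        = (cycleDensity 4 U ^ 2 ^ j) ^ 2 := by rw [← pow_mul, pow_succ]
      _ ≤ (cycleDensity (2 * (j + 2)) U) ^ 2 := by
          exact pow_le_pow_left₀ hnn ih 2
      _ ≤ cycleDensity (2 * (j + 3)) U := cycle_step hm hb hs j

end CycAux

/-- For every kernel `U` on `[0,1]²` with `‖U‖_∞ ≤ 1` and every integer `k ≥ 2`,
the cycle homomorphism densities satisfy `t(C_{2k}, U) ≥ t(C_4, U)^{2^{k−2}}`. -/
theorem cycle_density_two_k_ge_C4_pow (U : UI → UI → ℝ) (hU : IsKernel U)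
    (hbound : ∀ x y, |U x y| ≤ 1) (k : ℕ) (hk : 2 ≤ k) :
    cycleDensity 4 U ^ 2 ^ (k - 2) ≤ cycleDensity (2 * k) U := by
  obtain ⟨hm, hs, -⟩ := hU
  have h := CycAux.cycle_main (U := U) hm hbound hs (k - 2)
  rwa [Nat.sub_add_cancel hk] at h

end
end

section
/- Suppose U and V are graphons with V ≺ U. Then for every ε > 0 there exist an even number N and measure preserving bijections φ_1, …, φ_N of [0,1] such that ‖V − (1/N)∑_{i=1}^N U^{φ_i}‖₁ < ε, and moreover for at least half of the indices i ∈ {1,…,N/2} one has ‖U^{φ_{2i−1}} − U^{φ_{2i}}‖_□ > δ_□(U,V)/32. -/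
open MeasureTheory

attribute [local instance] Classical.propDecidable

noncomputable section

open Function

/-- Bounded measurable kernel with bound 1. -/
def BMK (f : UI → UI → ℝ) : Prop := Measurable (Function.uncurry f) ∧ ∀ x y, |f x y| ≤ 1

lemma IsGraphon.bmk {f} (h : IsGraphon f) : BMK f :=
  ⟨h.1, fun x y => abs_le.2 ⟨by linarith [(h.2.2 x y).1], (h.2.2 x y).2⟩⟩

lemma BMK.neg {f} (h : BMK f) : BMK (fun x y => - f x y) := by
  refine ⟨?_, fun x y => by simpa using h.2 x y⟩
  have : Function.uncurry (fun x y => - f x y) = fun z : UI × UI => - Function.uncurry f z := rfl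
  rw [this]; exact h.1.neg

lemma BMK.slice {f} (h : BMK f) (x : UI) : Measurable (f x) :=
  h.1.comp measurable_prodMk_left

lemma BMK.integrableOn_slice {f} (h : BMK f) (x : UI) (T : Set UI) :
    IntegrableOn (f x) T := by
  refine Integrable.integrableOn ⟨(h.slice x).aestronglyMeasurable, ?_⟩
  exact HasFiniteIntegral.of_bounded (C := 1) (Filter.Eventually.of_forall fun y => by
    simpa using h.2 x y)

lemma BMK.inner_bound {f} (h : BMK f) (x : UI) (T : Set UI) :
    |∫ y in T, f x y| ≤ 1 := by
  have := norm_setIntegral_le_of_norm_le_const (μ := volume) (s := T) (C := 1) (f := f x)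
    (measure_lt_top _ _) (fun y _ => by simpa using h.2 x y)
  calc |∫ y in T, f x y| ≤ 1 * (volume T).toReal := this
    _ ≤ 1 := by
      rw [one_mul]
      exact ENNReal.toReal_le_of_le_ofReal one_pos.le (by simpa using measure_mono (Set.subset_univ T) |>.trans_eq (by simp [measure_univ]))

lemma BMK.inner_meas {f} (h : BMK f) (T : Set UI) :
    Measurable (fun x => ∫ y in T, f x y) :=
  (MeasureTheory.StronglyMeasurable.integral_prod_right
    (f := f) (ν := volume.restrict T) (h.1.stronglyMeasurable)).measurable

lemma BMK.integrableOn_inner {f} (h : BMK f) (S T : Set UI) :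
    IntegrableOn (fun x => ∫ y in T, f x y) S := by
  refine Integrable.integrableOn ⟨(h.inner_meas T).aestronglyMeasurable, ?_⟩
  exact HasFiniteIntegral.of_bounded (C := 1)
    (Filter.Eventually.of_forall fun x => by simpa using h.inner_bound x T)

lemma BMK.double_bound {f} (h : BMK f) (S T : Set UI) :
    |∫ x in S, ∫ y in T, f x y| ≤ 1 := by
  have := norm_setIntegral_le_of_norm_le_const (μ := volume) (s := S) (C := 1) (f := fun x => ∫ y in T, f x y)
    (measure_lt_top _ _) (fun x _ => by simpa using h.inner_bound x T)
  calc |∫ x in S, ∫ y in T, f x y| ≤ 1 * (volume S).toReal := this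
    _ ≤ 1 := by
      rw [one_mul]
      exact ENNReal.toReal_le_of_le_ofReal one_pos.le (by simpa using measure_mono (Set.subset_univ S) |>.trans_eq (by simp [measure_univ]))

lemma setint_sub {f g} (hf : BMK f) (hg : BMK g) (S T : Set UI) :
    ∫ x in S, ∫ y in T, (f x y - g x y) =
      (∫ x in S, ∫ y in T, f x y) - ∫ x in S, ∫ y in T, g x y := by
  have : ∀ x : UI, (∫ y in T, (f x y - g x y)) = (∫ y in T, f x y) - ∫ y in T, g x y :=
    fun x => integral_sub (hf.integrableOn_slice x T) (hg.integrableOn_slice x T)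
  simp_rw [this]
  exact integral_sub (hf.integrableOn_inner S T) (hg.integrableOn_inner S T)

lemma cutNorm_set_nonempty (f : UI → UI → ℝ) :
    (0:ℝ) ∈ { r : ℝ | ∃ S T : Set UI, MeasurableSet S ∧ MeasurableSet T ∧
    r = |∫ x in S, ∫ y in T, f x y| } :=
  ⟨∅, ∅, MeasurableSet.empty, MeasurableSet.empty, by simp⟩

lemma cutNorm_bddAbove {f} (h : BMK f) :
    BddAbove { r : ℝ | ∃ S T : Set UI, MeasurableSet S ∧ MeasurableSet T ∧
    r = |∫ x in S, ∫ y in T, f x y| } := by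
  refine ⟨1, fun r hr => ?_⟩
  obtain ⟨S, T, _, _, rfl⟩ := hr
  exact h.double_bound S T

lemma cutNorm_nonneg {f} (h : BMK f) : 0 ≤ cutNorm f :=
  le_csSup (cutNorm_bddAbove h) (cutNorm_set_nonempty f)

lemma abs_le_cutNorm {f} (h : BMK f) {S T : Set UI} (hS : MeasurableSet S)
    (hT : MeasurableSet T) : |∫ x in S, ∫ y in T, f x y| ≤ cutNorm f :=
  le_csSup (cutNorm_bddAbove h) ⟨S, T, hS, hT, rfl⟩

lemma cutNorm_le {f} {c : ℝ}
    (h : ∀ S T : Set UI, MeasurableSet S → MeasurableSet T →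
      |∫ x in S, ∫ y in T, f x y| ≤ c) : cutNorm f ≤ c := by
  refine csSup_le ⟨0, cutNorm_set_nonempty f⟩ ?_
  rintro r ⟨S, T, hS, hT, rfl⟩; exact h S T hS hT

lemma cutNorm_neg (f : UI → UI → ℝ) : cutNorm (fun x y => - f x y) = cutNorm f := by
  unfold cutNorm
  congr 1
  ext r
  constructor <;> rintro ⟨S, T, hS, hT, rfl⟩ <;> refine ⟨S, T, hS, hT, ?_⟩ <;>
    simp [integral_neg]

lemma cutNorm_sub_comm (f g : UI → UI → ℝ) :
    cutNorm (fun x y => f x y - g x y) = cutNorm (fun x y => g x y - f x y) := by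
  rw [← cutNorm_neg (fun x y => g x y - f x y)]
  congr 1; funext x y; ring

namespace MPBx
def idMPB : MPB := ⟨id, Function.bijective_id, MeasurePreserving.id _⟩
end MPBx

lemma MPB.measurable (π : MPB) : Measurable π.toFun := π.measurePreserving.measurable

lemma MPB.emb (π : MPB) : MeasurableEmbedding π.toFun :=
  π.measurable.measurableEmbedding π.bijective.injective

def MPB.equiv (π : MPB) : UI ≃ᵐ UI :=
  { toEquiv := Equiv.ofBijective π.toFun π.bijective
    measurable_toFun := π.measurable
    measurable_invFun := by
      intro A hA
      have : (Equiv.ofBijective π.toFun π.bijective).symm ⁻¹' A = π.toFun '' A := by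
        rw [← Equiv.image_eq_preimage_symm]
        rfl
      rw [show ⇑(Equiv.ofBijective π.toFun π.bijective).symm ⁻¹' A
        = (Equiv.ofBijective π.toFun π.bijective).symm ⁻¹' A from rfl, this]
      exact π.emb.measurableSet_image.2 hA }

def MPB.symm (π : MPB) : MPB :=
  { toFun := π.equiv.symm
    bijective := π.equiv.symm.bijective
    measurePreserving := MeasurePreserving.symm π.equiv π.measurePreserving }

lemma MPB.symm_apply_apply (π : MPB) (x : UI) : π.symm.toFun (π.toFun x) = x :=
  π.equiv.symm_apply_apply x

lemma MPB.apply_symm_apply (π : MPB) (x : UI) : π.toFun (π.symm.toFun x) = x :=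
  π.equiv.apply_symm_apply x

def MPB.comp (π φ : MPB) : MPB :=
  { toFun := π.toFun ∘ φ.toFun
    bijective := π.bijective.comp φ.bijective
    measurePreserving := π.measurePreserving.comp φ.measurePreserving }

lemma bmk_vers {f} (h : BMK f) (π : MPB) : BMK (vers f π.toFun) := by
  constructor
  · have : Function.uncurry (vers f π.toFun)
        = Function.uncurry f ∘ (fun p : UI × UI => (π.toFun p.1, π.toFun p.2)) := rfl
    rw [this]
    exact h.1.comp ((π.measurable.comp measurable_fst).prodMk (π.measurable.comp measurable_snd))
  · exact fun x y => h.2 _ _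

/-- Change of variables for double set integrals. -/
lemma cov (π : MPB) (f : UI → UI → ℝ) (S T : Set UI) :
    ∫ x in S, ∫ y in T, f (π.toFun x) (π.toFun y)
      = ∫ x in π.toFun '' S, ∫ y in π.toFun '' T, f x y := by
  rw [π.measurePreserving.setIntegral_image_emb π.emb
    (fun x => ∫ y in π.toFun '' T, f x y) S]
  congr 1
  funext x
  rw [π.measurePreserving.setIntegral_image_emb π.emb (fun y => f (π.toFun x) y) T]

lemma cutNorm_vers_le {f} (h : BMK f) (π : MPB) : cutNorm (vers f π.toFun) ≤ cutNorm f := by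
  refine cutNorm_le ?_
  intro S T hS hT
  rw [show (∫ x in S, ∫ y in T, vers f π.toFun x y)
    = ∫ x in S, ∫ y in T, f (π.toFun x) (π.toFun y) from rfl, cov]
  exact abs_le_cutNorm h (π.emb.measurableSet_image.2 hS) (π.emb.measurableSet_image.2 hT)

lemma cutNorm_vers_eq {f} (h : BMK f) (π : MPB) : cutNorm (vers f π.toFun) = cutNorm f := by
  refine le_antisymm (cutNorm_vers_le h π) ?_
  have h2 : BMK (vers f π.toFun) := bmk_vers h π
  have := cutNorm_vers_le h2 π.symm
  have he : vers (vers f π.toFun) π.symm.toFun = f := by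
    funext x y
    simp only [vers, MPB.apply_symm_apply]
  rwa [he] at this

lemma bddBelow_cutDist (U V : UI → UI → ℝ) (hU : IsGraphon U) (hV : IsGraphon V) :
    BddBelow (Set.range fun φ : MPB => cutNorm (fun x y => U x y - vers V φ.toFun x y)) := by
  refine ⟨0, ?_⟩
  rintro r ⟨φ, rfl⟩
  refine cutNorm_nonneg ⟨?_, ?_⟩
  · have : Function.uncurry (fun x y => U x y - vers V φ.toFun x y)
      = fun z : UI × UI => Function.uncurry U z - Function.uncurry (vers V φ.toFun) z := rfl
    rw [this]
    exact hU.1.sub (bmk_vers hV.bmk φ).1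
  · intro x y
    have h1 := hU.2.2 x y
    have h2 := hV.2.2 (φ.toFun x) (φ.toFun y)
    simp only [Set.mem_Icc] at h1 h2
    rw [abs_le]
    constructor
    · show -1 ≤ U x y - vers V φ.toFun x y; simp only [vers]; linarith [h1.1, h2.2]
    · show U x y - vers V φ.toFun x y ≤ 1; simp only [vers]; linarith [h1.2, h2.1]

lemma BMK.sub_graphon {U V : UI → UI → ℝ} (hU : IsGraphon U) (hV : IsGraphon V) :
    BMK (fun x y => U x y - V x y) := by
  constructor
  · have : Function.uncurry (fun x y => U x y - V x y)
      = fun z : UI × UI => Function.uncurry U z - Function.uncurry V z := rfl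
    rw [this]; exact hU.1.sub hV.1
  · intro x y
    have h1 := hU.2.2 x y; have h2 := hV.2.2 x y
    simp only [Set.mem_Icc] at h1 h2
    rw [abs_le]
    constructor
    · show -1 ≤ U x y - V x y; linarith [h1.1, h2.2]
    · show U x y - V x y ≤ 1; linarith [h1.2, h2.1]

lemma cutDist_le (U V : UI → UI → ℝ) (hU : IsGraphon U) (hV : IsGraphon V) (φ : MPB) :
    cutDist U V ≤ cutNorm (fun x y => U x y - vers V φ.toFun x y) :=
  ciInf_le (bddBelow_cutDist U V hU hV) φ

/-- Every version of `U` is cut-norm far from `V`: at least `cutDist U V`. -/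
lemma version_far (U V : UI → UI → ℝ) (hU : IsGraphon U) (hV : IsGraphon V) (π : MPB) :
    cutDist U V ≤ cutNorm (fun x y => vers U π.toFun x y - V x y) := by
  have he : (fun x y => vers U π.toFun x y - V x y)
      = vers (fun x y => U x y - vers V π.symm.toFun x y) π.toFun := by
    funext x y
    simp only [vers, MPB.symm_apply_apply]
  have hbmk : BMK (fun x y => U x y - vers V π.symm.toFun x y) := by
    have : IsGraphon (vers V π.symm.toFun) := by
      refine ⟨(bmk_vers hV.bmk π.symm).1, fun x y => hV.2.1 _ _, fun x y => hV.2.2 _ _⟩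
    exact BMK.sub_graphon hU this
  rw [he, cutNorm_vers_eq hbmk π]
  exact cutDist_le U V hU hV π.symm

def prodFn (f : UI → UI → ℝ) : UI × UI → ℝ := fun z => f z.1 z.2

lemma BMK.prodFn_meas {f} (h : BMK f) : Measurable (prodFn f) := h.1

lemma bmk_integrable {h : UI × UI → ℝ} (hm : Measurable h) {C : ℝ} (hb : ∀ z, |h z| ≤ C) :
    Integrable h (volume : Measure (UI × UI)) :=
  ⟨hm.aestronglyMeasurable, HasFiniteIntegral.of_bounded (C := C)
    (Filter.Eventually.of_forall fun z => by simpa using hb z)⟩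

lemma BMK.prodFn_integrable {f} (h : BMK f) : Integrable (prodFn f) (volume : Measure (UI × UI)) :=
  bmk_integrable h.1 (fun z => h.2 z.1 z.2)

lemma rect_integral {f} (h : BMK f) (S T : Set UI) :
    ∫ z in S ×ˢ T, prodFn f z = ∫ x in S, ∫ y in T, f x y :=
  MeasureTheory.setIntegral_prod (μ := (volume : Measure UI)) (ν := (volume : Measure UI))
    (prodFn f) (h.prodFn_integrable.integrableOn)

/-- Weak-* convergence against rectangles upgrades to all measurable sets. -/
lemma W1 (G : ℕ → UI × UI → ℝ) (hGm : ∀ n, Measurable (G n)) (hGb : ∀ n z, |G n z| ≤ 1)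
    (hrect : ∀ S T : Set UI, MeasurableSet S → MeasurableSet T →
      Filter.Tendsto (fun n => ∫ z in S ×ˢ T, G n z) Filter.atTop (nhds 0)) :
    ∀ E : Set (UI × UI), MeasurableSet E →
      Filter.Tendsto (fun n => ∫ z in E, G n z) Filter.atTop (nhds 0) := by
  have hGint : ∀ n, Integrable (G n) (volume : Measure (UI × UI)) :=
    fun n => bmk_integrable (hGm n) (hGb n)
  have htotal : Filter.Tendsto (fun n => ∫ z, G n z) Filter.atTop (nhds 0) := by
    have := hrect Set.univ Set.univ MeasurableSet.univ MeasurableSet.univ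
    simpa [Set.univ_prod_univ] using this
  intro E hE
  refine MeasurableSpace.induction_on_inter (C := fun E (_ : MeasurableSet E) =>
      Filter.Tendsto (fun n => ∫ z in E, G n z) Filter.atTop (nhds 0))
    (generateFrom_prod.symm) isPiSystem_prod ?_ ?_ ?_ ?_ E hE
  · simp [tendsto_const_nhds]
  · rintro t ⟨S, hS, T, hT, rfl⟩
    exact hrect S T hS hT
  · intro t htm iht
    have : (fun n => ∫ z in tᶜ, G n z) = fun n => (∫ z, G n z) - ∫ z in t, G n z := by
      funext n
      rw [eq_sub_iff_add_eq, add_comm]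
      exact integral_add_compl htm (hGint n)
    rw [this]
    simpa using htotal.sub iht
  · intro f hdisj hfm ihf
    rw [NormedAddCommGroup.tendsto_nhds_zero]
    intro ε hε
    have hne : (∑' i, volume (f i)) ≠ ⊤ := by
      rw [← measure_iUnion hdisj hfm]
      exact (measure_lt_top _ _).ne
    have htail := ENNReal.tendsto_sum_nat_add (fun i => volume (f i)) hne
    have hpos : (0:ENNReal) < ENNReal.ofReal (ε/2) := by
      simp [ENNReal.ofReal_pos, half_pos hε]
    obtain ⟨k, hk⟩ := (htail.eventually (gt_mem_nhds hpos)).exists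
    set B : Set (UI × UI) := ⋃ i ∈ Finset.range k, f i with hB
    have hBmeas : MeasurableSet B := (Finset.range k).measurableSet_biUnion (fun i _ => hfm i)
    have hBsub : B ⊆ ⋃ i, f i := Set.iUnion₂_subset fun i _ => Set.subset_iUnion f i
    have hBk : Filter.Tendsto (fun n => ∫ z in B, G n z) Filter.atTop (nhds 0) := by
      have heq : ∀ n, ∫ z in B, G n z = ∑ i ∈ Finset.range k, ∫ z in f i, G n z := fun n =>
        integral_biUnion_finset (Finset.range k) (fun i _ => hfm i)
          (hdisj.set_pairwise _) (fun i _ => (hGint n).integrableOn)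
      simp_rw [heq]
      have := tendsto_finset_sum (Finset.range k) (fun i _ => ihf i)
      simpa using this
    have hBev := (NormedAddCommGroup.tendsto_nhds_zero.1 hBk) (ε/2) (half_pos hε)
    filter_upwards [hBev] with n hn
    have hsplit : ∫ z in ⋃ i, f i, G n z = (∫ z in B, G n z) + ∫ z in (⋃ i, f i) \ B, G n z := by
      rw [← MeasureTheory.setIntegral_union Set.disjoint_sdiff_right
        ((MeasurableSet.iUnion hfm).diff hBmeas) (hGint n).integrableOn (hGint n).integrableOn,
        Set.union_diff_cancel hBsub]
    have hdsub : (⋃ i, f i) \ B ⊆ ⋃ i, f (i + k) := by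
      rintro z ⟨hz1, hz2⟩
      obtain ⟨j, hj⟩ := Set.mem_iUnion.1 hz1
      rcases lt_or_ge j k with hjk | hjk
      · exact absurd (Set.mem_biUnion (Finset.mem_range.2 hjk) hj) hz2
      · exact Set.mem_iUnion.2 ⟨j - k, by rwa [Nat.sub_add_cancel hjk]⟩
    have hdm : volume ((⋃ i, f i) \ B) < ENNReal.ofReal (ε/2) :=
      lt_of_le_of_lt (le_trans (measure_mono hdsub) (measure_iUnion_le _)) hk
    have hdb : ‖∫ z in (⋃ i, f i) \ B, G n z‖ ≤ 1 * (volume ((⋃ i, f i) \ B)).toReal :=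
      norm_setIntegral_le_of_norm_le_const (measure_lt_top _ _)
        (fun z _ => by simpa using hGb n z)
    have hdb2 : ‖∫ z in (⋃ i, f i) \ B, G n z‖ < ε/2 := by
      refine lt_of_le_of_lt hdb ?_
      rw [one_mul]
      exact ENNReal.toReal_lt_of_lt_ofReal hdm
    calc ‖∫ z in ⋃ i, f i, G n z‖
        ≤ ‖∫ z in B, G n z‖ + ‖∫ z in (⋃ i, f i) \ B, G n z‖ := by
          rw [hsplit]; exact norm_add_le _ _
      _ < ε/2 + ε/2 := add_lt_add hn hdb2
      _ = ε := add_halves ε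

/-- Upgrade to pairing with arbitrary bounded measurable functions. -/
lemma W2 (G : ℕ → UI × UI → ℝ) (hGm : ∀ n, Measurable (G n)) (hGb : ∀ n z, |G n z| ≤ 1)
    (hrect : ∀ S T : Set UI, MeasurableSet S → MeasurableSet T →
      Filter.Tendsto (fun n => ∫ z in S ×ˢ T, G n z) Filter.atTop (nhds 0))
    (g : UI × UI → ℝ) (hg : Measurable g) (C : ℝ) (hgb : ∀ z, |g z| ≤ C) :
    Filter.Tendsto (fun n => ∫ z, G n z * g z) Filter.atTop (nhds 0) := by
  have hW1 := W1 G hGm hGb hrect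
  have hGint : ∀ n, Integrable (G n) (volume : Measure (UI × UI)) :=
    fun n => bmk_integrable (hGm n) (hGb n)
  -- step 1: simple functions
  have hsimple : ∀ s : SimpleFunc (UI × UI) ℝ,
      Filter.Tendsto (fun n => ∫ z, G n z * s z) Filter.atTop (nhds 0) := by
    intro s
    refine SimpleFunc.induction (motive := fun s : SimpleFunc (UI × UI) ℝ =>
      Filter.Tendsto (fun n => ∫ z, G n z * s z) Filter.atTop (nhds 0)) ?_ ?_ s
    · intro c E hE
      have heq : ∀ n, ∫ z, G n z *
          (SimpleFunc.piecewise E hE (SimpleFunc.const _ c) (SimpleFunc.const _ 0)) z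
          = (∫ z in E, G n z) * c := by
        intro n
        have h1 : ∀ z, G n z *
            (SimpleFunc.piecewise E hE (SimpleFunc.const _ c) (SimpleFunc.const _ 0)) z
            = E.indicator (fun z => G n z * c) z := by
          intro z
          simp only [SimpleFunc.coe_piecewise, SimpleFunc.coe_const, Set.piecewise]
          by_cases hz : z ∈ E <;> simp [Set.indicator, hz]
        simp_rw [h1]
        rw [integral_indicator hE, integral_mul_const]
      simp_rw [heq]
      simpa using (hW1 E hE).mul_const c
    · intro s t hdisj hs ht
      have heq : ∀ n, ∫ z, G n z * (s + t) z
          = (∫ z, G n z * s z) + ∫ z, G n z * t z := by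
        intro n
        have h1 : ∀ z, G n z * (s + t) z = G n z * s z + G n z * t z := by
          intro z; simp [mul_add]
        simp_rw [h1]
        obtain ⟨Cs, hCs⟩ := s.exists_forall_norm_le
        obtain ⟨Ct, hCt⟩ := t.exists_forall_norm_le
        refine integral_add (bmk_integrable ((hGm n).mul s.measurable) (C := Cs) ?_)
          (bmk_integrable ((hGm n).mul t.measurable) (C := Ct) ?_)
        · intro z
          calc |G n z * s z| = |G n z| * |s z| := abs_mul _ _
            _ ≤ 1 * Cs := by
                refine mul_le_mul (hGb n z) ?_ (abs_nonneg _) zero_le_one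
                simpa using hCs z
            _ = Cs := one_mul Cs
        · intro z
          calc |G n z * t z| = |G n z| * |t z| := abs_mul _ _
            _ ≤ 1 * Ct := by
                refine mul_le_mul (hGb n z) ?_ (abs_nonneg _) zero_le_one
                simpa using hCt z
            _ = Ct := one_mul Ct
      simp_rw [heq]
      simpa using hs.add ht
  -- step 2: approximate g
  rw [NormedAddCommGroup.tendsto_nhds_zero]
  intro ε hε
  -- the approximating simple functions
  set sk := fun k => SimpleFunc.approxOn g hg Set.univ 0 (Set.mem_univ 0) k with hsk
  have hL1 : Filter.Tendsto (fun k => ∫ z, ‖g z - sk k z‖) Filter.atTop (nhds 0) := by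
    have key : Filter.Tendsto (fun k => ∫ z, ‖g z - sk k z‖) Filter.atTop
        (nhds (∫ z : UI × UI, (0:ℝ))) := by
      refine tendsto_integral_of_dominated_convergence (fun _ => 3 * C) ?_ ?_ ?_ ?_
      · intro k
        exact ((hg.sub (sk k).measurable).norm).aestronglyMeasurable
      · exact integrable_const _
      · intro k
        refine Filter.Eventually.of_forall fun z => ?_
        have h1 : ‖sk k z‖ ≤ ‖g z‖ + ‖g z‖ :=
          SimpleFunc.norm_approxOn_zero_le hg (Set.mem_univ 0) z k
        have h2 : ‖g z‖ ≤ C := by rw [Real.norm_eq_abs]; exact hgb z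
        simp only [norm_norm]
        calc ‖g z - sk k z‖ ≤ ‖g z‖ + ‖sk k z‖ := norm_sub_le _ _
          _ ≤ 3 * C := by linarith
      · refine Filter.Eventually.of_forall fun z => ?_
        have := SimpleFunc.tendsto_approxOn hg (Set.mem_univ 0)
          (x := z) (by simp)
        have h2 : Filter.Tendsto (fun k => g z - sk k z) Filter.atTop (nhds 0) := by
          simpa using (tendsto_const_nhds (x := g z)).sub this
        simpa using h2.norm
    simpa using key
  obtain ⟨k, hk⟩ := ((NormedAddCommGroup.tendsto_nhds_zero.1 hL1) (ε/2) (half_pos hε)).exists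
  have hev := (NormedAddCommGroup.tendsto_nhds_zero.1 (hsimple (sk k))) (ε/2) (half_pos hε)
  filter_upwards [hev] with n hn
  have hint1 : Integrable (fun z => G n z * g z) (volume : Measure (UI × UI)) := by
    refine bmk_integrable ((hGm n).mul hg) (C := C) fun z => ?_
    calc |G n z * g z| = |G n z| * |g z| := abs_mul _ _
      _ ≤ 1 * C := mul_le_mul (hGb n z) (hgb z) (abs_nonneg _) zero_le_one
      _ = C := one_mul C
  obtain ⟨Cs, hCs⟩ := (sk k).exists_forall_norm_le
  have hint2 : Integrable (fun z => G n z * sk k z) (volume : Measure (UI × UI)) := by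
    refine bmk_integrable ((hGm n).mul (sk k).measurable) (C := Cs) fun z => ?_
    calc |G n z * sk k z| = |G n z| * |sk k z| := abs_mul _ _
      _ ≤ 1 * Cs := by
          refine mul_le_mul (hGb n z) ?_ (abs_nonneg _) zero_le_one
          simpa using hCs z
      _ = Cs := one_mul Cs
  have hdiff : ‖(∫ z, G n z * g z) - ∫ z, G n z * sk k z‖ ≤ ∫ z, ‖g z - sk k z‖ := by
    rw [← integral_sub hint1 hint2]
    calc ‖∫ z, (G n z * g z - G n z * sk k z)‖
        ≤ ∫ z, ‖G n z * g z - G n z * sk k z‖ := norm_integral_le_integral_norm _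
      _ ≤ ∫ z, ‖g z - sk k z‖ := by
          refine integral_mono (hint1.sub hint2).norm ?_ fun z => ?_
          · refine (bmk_integrable (hg.sub (sk k).measurable) (C := 3*C) (fun z => ?_)).norm
            have h1 : ‖sk k z‖ ≤ ‖g z‖ + ‖g z‖ :=
              SimpleFunc.norm_approxOn_zero_le hg (Set.mem_univ 0) z k
            have h2 : ‖g z‖ ≤ C := by rw [Real.norm_eq_abs]; exact hgb z
            calc |g z - sk k z| ≤ |g z| + |sk k z| := abs_sub _ _
              _ = ‖g z‖ + ‖sk k z‖ := by rw [Real.norm_eq_abs, Real.norm_eq_abs]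
              _ ≤ 3 * C := by linarith
          · calc ‖G n z * g z - G n z * sk k z‖
                  = ‖G n z‖ * ‖g z - sk k z‖ := by rw [← mul_sub, norm_mul]
              _ ≤ 1 * ‖g z - sk k z‖ :=
                  mul_le_mul_of_nonneg_right (by simpa using hGb n z) (norm_nonneg _)
              _ = ‖g z - sk k z‖ := one_mul _
  calc ‖∫ z, G n z * g z‖
      ≤ ‖∫ z, G n z * sk k z‖ + ‖(∫ z, G n z * g z) - ∫ z, G n z * sk k z‖ := by
        have := norm_add_le (∫ z, G n z * sk k z) ((∫ z, G n z * g z) - ∫ z, G n z * sk k z)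
        simpa using this
    _ ≤ ‖∫ z, G n z * sk k z‖ + ∫ z, ‖g z - sk k z‖ := by linarith [hdiff]
    _ < ε/2 + ε/2 := by
        refine add_lt_add hn ?_
        calc ∫ z, ‖g z - sk k z‖ = ‖∫ z, ‖g z - sk k z‖‖ := by
              rw [Real.norm_of_nonneg (integral_nonneg fun z => norm_nonneg _)]
          _ < ε/2 := hk
    _ = ε := add_halves ε

instance : Nonempty MPB := ⟨⟨id, Function.bijective_id, MeasurePreserving.id _⟩⟩

lemma graphon_vers {U : UI → UI → ℝ} (hU : IsGraphon U) (π : MPB) :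
    IsGraphon (vers U π.toFun) :=
  ⟨(bmk_vers hU.bmk π).1, fun x y => hU.2.1 _ _, fun x y => hU.2.2 _ _⟩

lemma bmk_sub_vers {U V : UI → UI → ℝ} (hU : IsGraphon U) (hV : IsGraphon V) (φ : MPB) :
    BMK (fun x y => U x y - vers V φ.toFun x y) :=
  BMK.sub_graphon hU (graphon_vers hV φ)

/-- rectangle convergence of the differences, on the product space. -/
lemma rect_conv {U V : UI → UI → ℝ} (hU : IsGraphon U) (hV : IsGraphon V) (π : ℕ → MPB)
    (hconv : WeakStarTendsto (fun n => vers U (π n).toFun) V)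
    (S T : Set UI) (hS : MeasurableSet S) (hT : MeasurableSet T) :
    Filter.Tendsto (fun n => ∫ z in S ×ˢ T,
      prodFn (fun x y => vers U (π n).toFun x y - V x y) z) Filter.atTop (nhds 0) := by
  have heq : ∀ n, ∫ z in S ×ˢ T, prodFn (fun x y => vers U (π n).toFun x y - V x y) z
      = (∫ x in S, ∫ y in T, vers U (π n).toFun x y) - ∫ x in S, ∫ y in T, V x y := by
    intro n
    have h1 : prodFn (fun x y => vers U (π n).toFun x y - V x y)
        = fun z => prodFn (vers U (π n).toFun) z - prodFn V z := rfl
    rw [h1, integral_sub ((graphon_vers hU (π n)).bmk.prodFn_integrable.integrableOn)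
      (hV.bmk.prodFn_integrable.integrableOn),
      rect_integral (graphon_vers hU (π n)).bmk, rect_integral hV.bmk]
  simp_rw [heq]
  simpa using (hconv S T hS hT).sub_const (∫ x in S, ∫ y in T, V x y)

lemma cutDist_nonneg {U V : UI → UI → ℝ} (hU : IsGraphon U) (hV : IsGraphon V) :
    0 ≤ cutDist U V :=
  le_ciInf fun φ => cutNorm_nonneg (bmk_sub_vers hU hV φ)

lemma cutDist_pos {U V : UI → UI → ℝ} (hU : IsGraphon U) (hV : IsGraphon V)
    (h2 : ¬ envelope U ⊆ envelope V) : 0 < cutDist U V := by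
  rcases lt_or_ge 0 (cutDist U V) with h | h
  · exact h
  exfalso
  have hd0 : cutDist U V = 0 := le_antisymm h (cutDist_nonneg hU hV)
  refine h2 ?_
  rintro W ⟨hWg, π, hπ⟩
  have hch : ∀ n : ℕ, ∃ ψ : MPB,
      cutNorm (fun x y => U x y - vers V ψ.toFun x y) < 1/(n+1) := by
    intro n
    have : cutDist U V < 1/(n+1) := by
      rw [hd0]; positivity
    exact exists_lt_of_ciInf_lt this
  choose φ hφ using hch
  refine ⟨hWg, fun n => MPB.comp (φ n) (π n), ?_⟩
  intro S T hS hT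
  have key : ∀ n : ℕ, |(∫ x in S, ∫ y in T, vers V (MPB.comp (φ n) (π n)).toFun x y)
      - ∫ x in S, ∫ y in T, vers U (π n).toFun x y| ≤ 1/(n+1) := by
    intro n
    set g : UI → UI → ℝ := fun x y => vers V (φ n).toFun x y - U x y with hg
    have hgbmk : BMK g := BMK.sub_graphon (graphon_vers hV (φ n)) hU
    have hveq : ∀ x y, vers g (π n).toFun x y
        = vers V (MPB.comp (φ n) (π n)).toFun x y - vers U (π n).toFun x y := fun x y => rfl
    have hsub := setint_sub (f := vers V (MPB.comp (φ n) (π n)).toFun)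
      (g := vers U (π n).toFun) (graphon_vers hV _).bmk (graphon_vers hU _).bmk S T
    have h1 : ∫ x in S, ∫ y in T, vers g (π n).toFun x y
        = (∫ x in S, ∫ y in T, vers V (MPB.comp (φ n) (π n)).toFun x y)
          - ∫ x in S, ∫ y in T, vers U (π n).toFun x y := by
      simp_rw [hveq]; exact hsub
    rw [← h1]
    calc |∫ x in S, ∫ y in T, vers g (π n).toFun x y|
        ≤ cutNorm (vers g (π n).toFun) := abs_le_cutNorm (bmk_vers hgbmk (π n)) hS hT
      _ = cutNorm g := cutNorm_vers_eq hgbmk (π n)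
      _ = cutNorm (fun x y => U x y - vers V (φ n).toFun x y) := cutNorm_sub_comm _ _
      _ ≤ 1/(n+1) := (hφ n).le
  have hzero : Filter.Tendsto (fun n => (∫ x in S, ∫ y in T,
      vers V (MPB.comp (φ n) (π n)).toFun x y)
      - ∫ x in S, ∫ y in T, vers U (π n).toFun x y) Filter.atTop (nhds 0) := by
    refine squeeze_zero_norm (fun n => key n) ?_
    exact tendsto_one_div_add_atTop_nhds_zero_nat
  have := (hπ S T hS hT).add hzero
  simp only [add_zero] at this
  convert this using 2 with n
  ring

section Key

lemma K1 {U V : UI → UI → ℝ} (hU : IsGraphon U) (hV : IsGraphon V) (π : ℕ → MPB)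
    (hconv : WeakStarTendsto (fun n => vers U (π n).toFun) V)
    (hd : 0 < cutDist U V) (m : ℕ) :
    ∀ᶠ n in Filter.atTop, cutDist U V / 32 <
      cutNorm (fun x y => vers U (π m).toFun x y - vers U (π n).toFun x y) := by
  set d := cutDist U V with hdd
  by_contra hcon
  rw [Filter.not_eventually] at hcon
  have hcon2 : ∃ᶠ n in Filter.atTop,
      cutNorm (fun x y => vers U (π m).toFun x y - vers U (π n).toFun x y) ≤ d / 32 := by
    refine hcon.mono fun n hn => ?_
    exact le_of_not_gt hn
  obtain ⟨ψ, hψmono, hψ⟩ := Filter.extraction_of_frequently_atTop hcon2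
  have hbig : cutNorm (fun x y => V x y - vers U (π m).toFun x y) ≤ d / 32 := by
    refine cutNorm_le ?_
    intro S T hS hT
    have hlim : Filter.Tendsto (fun k => (∫ x in S, ∫ y in T, vers U (π (ψ k)).toFun x y)
        - ∫ x in S, ∫ y in T, vers U (π m).toFun x y) Filter.atTop
        (nhds ((∫ x in S, ∫ y in T, V x y) - ∫ x in S, ∫ y in T, vers U (π m).toFun x y)) :=
      ((hconv S T hS hT).comp hψmono.tendsto_atTop).sub_const _
    have hbd : ∀ k, |(∫ x in S, ∫ y in T, vers U (π (ψ k)).toFun x y)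
        - ∫ x in S, ∫ y in T, vers U (π m).toFun x y| ≤ d / 32 := by
      intro k
      have hbmk : BMK (fun x y => vers U (π (ψ k)).toFun x y - vers U (π m).toFun x y) :=
        BMK.sub_graphon (graphon_vers hU _) (graphon_vers hU _)
      have h1 := setint_sub (graphon_vers hU (π (ψ k))).bmk (graphon_vers hU (π m)).bmk S T
      rw [← h1]
      calc |∫ x in S, ∫ y in T, (vers U (π (ψ k)).toFun x y - vers U (π m).toFun x y)|
          ≤ cutNorm (fun x y => vers U (π (ψ k)).toFun x y - vers U (π m).toFun x y) :=
            abs_le_cutNorm hbmk hS hT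
        _ = cutNorm (fun x y => vers U (π m).toFun x y - vers U (π (ψ k)).toFun x y) :=
            cutNorm_sub_comm _ _
        _ ≤ d / 32 := hψ k
    have hlimabs : |(∫ x in S, ∫ y in T, V x y)
        - ∫ x in S, ∫ y in T, vers U (π m).toFun x y| ≤ d / 32 :=
      le_of_tendsto hlim.abs (Filter.Eventually.of_forall hbd)
    have h2 := setint_sub hV.bmk (graphon_vers hU (π m)).bmk S T
    rw [h2]
    exact hlimabs
  have hfar : d ≤ cutNorm (fun x y => V x y - vers U (π m).toFun x y) := by
    have := version_far U V hU hV (π m)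
    rwa [cutNorm_sub_comm] at this
  linarith

lemma K2 {U V : UI → UI → ℝ} (hU : IsGraphon U) (hV : IsGraphon V) (π : ℕ → MPB)
    (hconv : WeakStarTendsto (fun n => vers U (π n).toFun) V)
    (δ : ℝ) (hδ : 0 < δ) (m : ℕ) :
    ∀ᶠ n in Filter.atTop,
      |∫ z : UI × UI, prodFn (fun x y => vers U (π n).toFun x y - V x y) z *
        prodFn (fun x y => vers U (π m).toFun x y - V x y) z| ≤ δ := by
  have hGb : ∀ n (z : UI × UI), |prodFn (fun x y => vers U (π n).toFun x y - V x y) z| ≤ 1 :=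
    fun n z => (BMK.sub_graphon (graphon_vers hU (π n)) hV).2 z.1 z.2
  have hGm : ∀ n, Measurable (prodFn (fun x y => vers U (π n).toFun x y - V x y)) :=
    fun n => (BMK.sub_graphon (graphon_vers hU (π n)) hV).1
  have := W2 (fun n => prodFn (fun x y => vers U (π n).toFun x y - V x y)) hGm hGb
    (fun S T hS hT => rect_conv hU hV π hconv S T hS hT)
    (prodFn (fun x y => vers U (π m).toFun x y - V x y)) (hGm m) 1 (hGb m)
  have hev := (NormedAddCommGroup.tendsto_nhds_zero.1 this) δ hδ
  refine hev.mono fun n hn => ?_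
  rw [Real.norm_eq_abs] at hn
  exact hn.le

end Key

/-- Building a chain satisfying a binary relation that holds eventually. -/
lemma chain_exists (R : ℕ → ℕ → Prop) (hR : ∀ m, ∀ᶠ n in Filter.atTop, R m n) :
    ∀ k : ℕ, ∃ v : ℕ → ℕ, ∀ i j, i < j → j < k → R (v i) (v j) := by
  intro k
  induction k with
  | zero => exact ⟨id, fun i j _ hj => absurd hj (Nat.not_lt_zero j)⟩
  | succ k ih =>
      obtain ⟨v, hv⟩ := ih
      have hev : ∀ᶠ n in Filter.atTop, ∀ i ∈ Finset.range k, R (v i) n :=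
        (Filter.eventually_all_finset (Finset.range k)).2 fun i _ => hR (v i)
      obtain ⟨n, hn⟩ := hev.exists
      refine ⟨fun i => if i < k then v i else n, ?_⟩
      intro i j hij hjk
      rcases lt_or_ge j k with hj | hj
      · simp only [if_pos (hij.trans hj), if_pos hj]
        exact hv i j hij hj
      · have hjeq : j = k := le_antisymm (Nat.lt_succ_iff.1 hjk) hj
        have hik : i < k := hjeq ▸ hij
        simp only [if_pos hik, if_neg (by omega : ¬ j < k)]
        exact hn i (Finset.mem_range.2 hik)

lemma sum_pair (a : ℕ → ℝ) (M : ℕ) :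
    ∑ i ∈ Finset.range M, (a (2*i) + a (2*i+1)) = ∑ k ∈ Finset.range (2*M), a k := by
  induction M with
  | zero => simp
  | succ M ih =>
      rw [Finset.sum_range_succ, ih, Nat.mul_succ,
        Finset.sum_range_succ, Finset.sum_range_succ]
      ring



/-- If `V ≺ U` are graphons, then for every `ε > 0` there exist an even number
`N = 2M` of measure preserving bijections of `[0,1]` (presented as `M` pairs `(φ i, ψ i)`,
i.e. `φ_{2i-1} := φ i` and `φ_{2i} := ψ i`) such that the average of the corresponding `N`
versions of `U` is `ε`-close to `V` in `L¹`, and for at least half of the indices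
`i ∈ {1,…,M}` one has `‖U^{φ i} − U^{ψ i}‖_□ > δ_□(U,V)/32`. -/
theorem L1_approx_by_versions (U V : UI → UI → ℝ) (hU : IsGraphon U) (hV : IsGraphon V)
    (hVU : structLT V U) (ε : ℝ) (hε : 0 < ε) :
    ∃ M : ℕ, 0 < M ∧ ∃ φ ψ : Fin M → MPB,
      L1dist V (fun x y =>
        (∑ i : Fin M, (vers U (φ i).toFun x y + vers U (ψ i).toFun x y)) / (2 * M)) < ε ∧
      M ≤ 2 * (Finset.univ.filter (fun i : Fin M =>
        cutDist U V / 32 <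
          cutNorm (fun x y => vers U (φ i).toFun x y - vers U (ψ i).toFun x y))).card := by
  obtain ⟨π, hconv⟩ : ∃ π : ℕ → MPB, WeakStarTendsto (fun n => vers U (π n).toFun) V := by
    have hmem : V ∈ envelope U :=
      hVU.1 ⟨hV, fun _ => MPBx.idMPB, fun S T hS hT => tendsto_const_nhds⟩
    exact hmem.2
  have hd : 0 < cutDist U V := cutDist_pos hU hV hVU.2
  set s : ℝ := ε/2 with hs
  have hs0 : 0 < s := half_pos hε
  set δ : ℝ := s^2/4 with hδdef
  have hδ0 : 0 < δ := by positivity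
  set M : ℕ := ⌈(4:ℝ)/s^2⌉₊ + 1 with hM
  have hM0 : 0 < M := Nat.succ_pos _
  set K : ℕ := 2*M with hKdef
  have hK0 : 0 < K := by omega
  have hKR : (0:ℝ) < (K:ℝ) := by exact_mod_cast hK0
  have hKbig : (4:ℝ)/s^2 ≤ (K:ℝ) := by
    calc (4:ℝ)/s^2 ≤ (⌈(4:ℝ)/s^2⌉₊ : ℝ) := Nat.le_ceil _
      _ ≤ (K:ℝ) := by
          have : (⌈(4:ℝ)/s^2⌉₊ : ℕ) ≤ K := by omega
          exact_mod_cast this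
  have h1K : 1/(K:ℝ) ≤ s^2/4 := by
    rw [div_le_div_iff₀ hKR (by norm_num)]
    have h4 : (4:ℝ) ≤ (K:ℝ) * s^2 := by
      have := (div_le_iff₀ (by positivity : (0:ℝ) < s^2)).1 hKbig
      linarith
    linarith
  obtain ⟨v, hv⟩ := chain_exists (fun m n =>
      (cutDist U V / 32 < cutNorm (fun x y => vers U (π m).toFun x y - vers U (π n).toFun x y)) ∧
      |∫ z : UI × UI, prodFn (fun x y => vers U (π n).toFun x y - V x y) z *
        prodFn (fun x y => vers U (π m).toFun x y - V x y) z| ≤ δ)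
    (fun m => (K1 hU hV π hconv hd m).and (K2 hU hV π hconv δ hδ0 m)) K
  refine ⟨M, hM0, fun i => π (v (2*(i:ℕ))), fun i => π (v (2*(i:ℕ)+1)), ?_, ?_⟩
  · -- the L1 estimate
    set Gp : ℕ → UI × UI → ℝ :=
      fun n => prodFn (fun x y => vers U (π n).toFun x y - V x y) with hGp
    have hGpm : ∀ n, Measurable (Gp n) :=
      fun n => (BMK.sub_graphon (graphon_vers hU (π n)) hV).1
    have hGpb : ∀ n z, |Gp n z| ≤ 1 :=
      fun n z => (BMK.sub_graphon (graphon_vers hU (π n)) hV).2 z.1 z.2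
    have hprod_int : ∀ a b : ℕ, Integrable (fun z => Gp a z * Gp b z)
        (volume : Measure (UI × UI)) := by
      intro a b
      refine bmk_integrable ((hGpm a).mul (hGpm b)) (C := 1) fun z => ?_
      calc |Gp a z * Gp b z| = |Gp a z| * |Gp b z| := abs_mul _ _
        _ ≤ 1 * 1 := mul_le_mul (hGpb a z) (hGpb b z) (abs_nonneg _) zero_le_one
        _ = 1 := one_mul 1
    have hcross : ∀ j l, j ∈ Finset.range K → l ∈ Finset.range K → j ≠ l →
        |∫ z : UI × UI, Gp (v j) z * Gp (v l) z| ≤ δ := by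
      intro j l hj hl hne
      rcases lt_or_gt_of_ne hne with h | h
      · have := (hv j l h (Finset.mem_range.1 hl)).2
        have hcomm : (fun z : UI × UI => Gp (v j) z * Gp (v l) z)
            = fun z => Gp (v l) z * Gp (v j) z := by funext z; ring
        rw [hcomm]
        exact this
      · exact (hv l j h (Finset.mem_range.1 hj)).2
    have hdiag : ∀ a : ℕ, ∫ z : UI × UI, Gp a z * Gp a z ≤ 1 := by
      intro a
      have hpt : ∀ z : UI × UI, Gp a z * Gp a z ≤ 1 := by
        intro z
        have := hGpb a z
        nlinarith [abs_nonneg (Gp a z), sq_abs (Gp a z)]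
      calc ∫ z : UI × UI, Gp a z * Gp a z ≤ ∫ _z : UI × UI, (1:ℝ) :=
            integral_mono (hprod_int a a) (integrable_const _) hpt
        _ = 1 := by simp
    have hsum2 : ∫ z : UI × UI, (∑ k ∈ Finset.range K, Gp (v k) z)^2
        ≤ (K:ℝ) + (K:ℝ)^2 * δ := by
      have hpt : ∀ z : UI × UI, (∑ k ∈ Finset.range K, Gp (v k) z)^2
          = ∑ j ∈ Finset.range K, ∑ l ∈ Finset.range K, Gp (v j) z * Gp (v l) z := by
        intro z
        rw [pow_two, Finset.sum_mul_sum]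
      have hint1 : ∀ j, Integrable (fun z => ∑ l ∈ Finset.range K, Gp (v j) z * Gp (v l) z)
          (volume : Measure (UI × UI)) :=
        fun j => integrable_finset_sum _ (fun l _ => hprod_int (v j) (v l))
      calc ∫ z : UI × UI, (∑ k ∈ Finset.range K, Gp (v k) z)^2
          = ∑ j ∈ Finset.range K, ∑ l ∈ Finset.range K, ∫ z : UI × UI, Gp (v j) z * Gp (v l) z := by
            simp_rw [hpt]
            rw [integral_finset_sum _ (fun j _ => hint1 j)]
            exact Finset.sum_congr rfl fun j _ =>
              integral_finset_sum _ (fun l _ => hprod_int (v j) (v l))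
        _ ≤ ∑ j ∈ Finset.range K, ∑ l ∈ Finset.range K, (if j = l then (1:ℝ) else δ) := by
            refine Finset.sum_le_sum fun j hj => Finset.sum_le_sum fun l hl => ?_
            by_cases h : j = l
            · subst h
              simpa using hdiag (v j)
            · simp only [if_neg h]
              exact le_of_abs_le (hcross j l hj hl h)
        _ = ∑ j ∈ Finset.range K, ((1 - δ) + (K:ℝ) * δ) := by
            refine Finset.sum_congr rfl fun j hj => ?_
            have : ∀ l, (if j = l then (1:ℝ) else δ) = (if j = l then (1:ℝ)-δ else 0) + δ := by
              intro l; by_cases h : j = l <;> simp [h]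
            simp_rw [this]
            rw [Finset.sum_add_distrib, Finset.sum_ite_eq, if_pos hj]
            simp [mul_comm]
        _ = (K:ℝ) * ((1 - δ) + (K:ℝ) * δ) := by
            rw [Finset.sum_const, Finset.card_range, nsmul_eq_mul]
        _ ≤ (K:ℝ) + (K:ℝ)^2 * δ := by nlinarith [hδ0.le, hKR.le]
    set A : UI × UI → ℝ := fun z => (∑ k ∈ Finset.range K, Gp (v k) z)/(K:ℝ) with hA
    have hAmeas : Measurable A :=
      (Finset.measurable_sum _ (fun k _ => hGpm (v k))).div_const _
    have hAb : ∀ z, |A z| ≤ 1 := by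
      intro z
      rw [hA]
      simp only [abs_div]
      rw [abs_of_pos hKR, div_le_one hKR]
      calc |∑ k ∈ Finset.range K, Gp (v k) z| ≤ ∑ k ∈ Finset.range K, |Gp (v k) z| :=
            Finset.abs_sum_le_sum_abs _ _
        _ ≤ ∑ _k ∈ Finset.range K, (1:ℝ) := Finset.sum_le_sum fun k _ => hGpb (v k) z
        _ = (K:ℝ) := by simp
    have hAint : Integrable A (volume : Measure (UI × UI)) :=
      bmk_integrable hAmeas hAb
    have hA2int : Integrable (fun z => A z^2) (volume : Measure (UI × UI)) := by
      refine bmk_integrable (hAmeas.pow_const 2) (C := 1) fun z => ?_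
      rw [abs_pow]
      exact pow_le_one₀ (abs_nonneg _) (hAb z)
    have hA2 : ∫ z : UI × UI, A z^2 ≤ 1/(K:ℝ) + δ := by
      have heq : ∀ z : UI × UI, A z^2 = (∑ k ∈ Finset.range K, Gp (v k) z)^2/(K:ℝ)^2 := by
        intro z; rw [hA]; rw [div_pow]
      calc ∫ z : UI × UI, A z^2
          = (∫ z : UI × UI, (∑ k ∈ Finset.range K, Gp (v k) z)^2)/(K:ℝ)^2 := by
            simp_rw [heq]; rw [integral_div]
        _ ≤ ((K:ℝ) + (K:ℝ)^2 * δ)/(K:ℝ)^2 := by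
            gcongr
        _ = 1/(K:ℝ) + δ := by field_simp
    have hintabs : ∫ z : UI × UI, |A z| ≤ s := by
      have hpt : ∀ z : UI × UI, |A z| ≤ A z^2/(2*s) + s/2 := by
        intro z
        have h2 : |A z|^2 = A z^2 := sq_abs _
        have h3 : |A z| * (2*s) ≤ A z^2 + s^2 := by nlinarith [sq_nonneg (|A z| - s)]
        have h4 : |A z| ≤ (A z^2 + s^2)/(2*s) := (le_div_iff₀ (by positivity)).2 h3
        have h5 : (A z^2 + s^2)/(2*s) = A z^2/(2*s) + s/2 := by field_simp
        linarith
      have hrhs_int : Integrable (fun z => A z^2/(2*s) + s/2) (volume : Measure (UI × UI)) :=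
        (hA2int.div_const _).add (integrable_const _)
      calc ∫ z : UI × UI, |A z| ≤ ∫ z : UI × UI, (A z^2/(2*s) + s/2) :=
            integral_mono hAint.abs hrhs_int hpt
        _ = (∫ z : UI × UI, A z^2)/(2*s) + s/2 := by
            rw [integral_add (hA2int.div_const _) (integrable_const _), integral_div]
            simp
        _ ≤ s := by
          have hnum : (∫ z : UI × UI, A z^2) ≤ s^2/2 := by
            calc (∫ z : UI × UI, A z^2) ≤ 1/(K:ℝ) + δ := hA2
              _ ≤ s^2/4 + s^2/4 := by rw [hδdef]; linarith [h1K]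
              _ = s^2/2 := by ring
          have hdiv : (∫ z : UI × UI, A z^2)/(2*s) ≤ s/4 := by
            rw [div_le_iff₀ (by positivity)]
            nlinarith
          linarith
    -- identify the L1 distance with ∫ |A|
    have hptavg : ∀ x y : UI, V x y -
        (∑ i : Fin M, (vers U (π (v (2*(i:ℕ)))).toFun x y
          + vers U (π (v (2*(i:ℕ)+1))).toFun x y)) / (2 * (M:ℝ))
        = - A (x, y) := by
      intro x y
      have hfin : (∑ i : Fin M, (vers U (π (v (2*(i:ℕ)))).toFun x y
          + vers U (π (v (2*(i:ℕ)+1))).toFun x y))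
          = ∑ k ∈ Finset.range K, vers U (π (v k)).toFun x y := by
        rw [Fin.sum_univ_eq_sum_range (fun i => vers U (π (v (2*i))).toFun x y
          + vers U (π (v (2*i+1))).toFun x y) M]
        exact sum_pair (fun k => vers U (π (v k)).toFun x y) M
      have hsumG : ∑ k ∈ Finset.range K, Gp (v k) (x, y)
          = (∑ k ∈ Finset.range K, vers U (π (v k)).toFun x y) - (K:ℝ) * V x y := by
        have : ∀ k, Gp (v k) (x, y) = vers U (π (v k)).toFun x y - V x y := fun k => rfl
        simp_rw [this]
        rw [Finset.sum_sub_distrib, Finset.sum_const, Finset.card_range, nsmul_eq_mul]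
      have hKM : (K:ℝ) = 2 * (M:ℝ) := by rw [hKdef]; push_cast; ring
      simp only [hA]
      rw [hfin, hsumG, hKM]
      have h2M : (2 * (M:ℝ)) ≠ 0 := by positivity
      field_simp
      ring
    have hL1eq : L1dist V (fun x y =>
        (∑ i : Fin M, (vers U (π (v (2*(i:ℕ)))).toFun x y
          + vers U (π (v (2*(i:ℕ)+1))).toFun x y)) / (2 * (M:ℝ)))
        = ∫ z : UI × UI, |A z| := by
      have hfe : ∀ x y : UI, |V x y -
          (∑ i : Fin M, (vers U (π (v (2*(i:ℕ)))).toFun x y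
            + vers U (π (v (2*(i:ℕ)+1))).toFun x y)) / (2 * (M:ℝ))|
          = |A (x, y)| := by
        intro x y
        rw [hptavg x y, abs_neg]
      unfold L1dist
      simp_rw [hfe]
      have := MeasureTheory.integral_integral (μ := (volume : Measure UI))
        (ν := (volume : Measure UI)) (f := fun x y => |A (x, y)|) hAint.abs
      rw [Measure.volume_eq_prod]
      simpa using this
    calc L1dist V (fun x y =>
        (∑ i : Fin M, (vers U (π (v (2*(i:ℕ)))).toFun x y
          + vers U (π (v (2*(i:ℕ)+1))).toFun x y)) / (2 * (M:ℝ)))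
        = ∫ z : UI × UI, |A z| := hL1eq
      _ ≤ s := hintabs
      _ < ε := by rw [hs]; linarith
  · -- the counting part
    have hall : ∀ i : Fin M, cutDist U V / 32 <
        cutNorm (fun x y => vers U (π (v (2*(i:ℕ)))).toFun x y
          - vers U (π (v (2*(i:ℕ)+1))).toFun x y) := by
      intro i
      have hi := i.isLt
      exact (hv (2*(i:ℕ)) (2*(i:ℕ)+1) (by omega) (by omega)).1
    rw [Finset.filter_true_of_mem (fun i _ => hall i)]
    rw [Finset.card_univ, Fintype.card_fin]
    omega

end
end

section
/- Let ε > 0, let W : [0,1]² → [0,1] be a graphon, let P be a finite measurable partition of [0,1], and let X ⊆ [0,1] be a measurable set such that |∫_{X×X}(W − W^{⋈P})| > ε. Let P* := {C∩X, C\X : C ∈ P} be the common refinement of P with {X, [0,1]\X}. Then t(C_4, W^{⋈P*}) > t(C_4, W^{⋈P}) + ε⁴/100. -/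
open MeasureTheory

attribute [local instance] Classical.propDecidable

noncomputable section

section AuxSection
namespace PumpAux
open Matrix
variable {n : Type*} [Fintype n]

def ip (X Y : Matrix n n ℝ) : ℝ := (Xᵀ * Y).trace

lemma ip_eq_sum (X Y : Matrix n n ℝ) : ip X Y = ∑ i, ∑ j, X i j * Y i j := by
  simp only [ip, Matrix.trace, Matrix.diag, Matrix.mul_apply, Matrix.transpose_apply]
  exact Finset.sum_comm

lemma ip_nonneg (X : Matrix n n ℝ) : 0 ≤ ip X X := by
  rw [ip_eq_sum]
  exact Finset.sum_nonneg fun i _ => Finset.sum_nonneg fun j _ => mul_self_nonneg _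

lemma ip_comm (X Y : Matrix n n ℝ) : ip X Y = ip Y X := by
  rw [ip_eq_sum, ip_eq_sum]
  exact Finset.sum_congr rfl fun i _ => Finset.sum_congr rfl fun j _ => mul_comm _ _

lemma ip_add_left (X Y Z : Matrix n n ℝ) : ip (X + Y) Z = ip X Z + ip Y Z := by
  rw [ip, ip, ip, Matrix.transpose_add, Matrix.add_mul, Matrix.trace_add]

lemma ip_add_right (X Y Z : Matrix n n ℝ) : ip X (Y + Z) = ip X Y + ip X Z := by
  rw [ip, ip, ip, Matrix.mul_add, Matrix.trace_add]

lemma ip_zero_left_of (X Y E F : Matrix n n ℝ) (hX : X = E * X) (hY : Y = F * Y)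
    (h : Eᵀ * F = 0) : ip X Y = 0 := by
  rw [ip]
  calc ((X)ᵀ * Y).trace = ((E*X)ᵀ * (F*Y)).trace := by rw [← hX, ← hY]
  _ = (Xᵀ * (Eᵀ * F) * Y).trace := by
        rw [Matrix.transpose_mul]
        simp only [Matrix.mul_assoc]
  _ = 0 := by rw [h]; simp

lemma ip_zero_right_of (X Y E F : Matrix n n ℝ) (hX : X = X * E) (hY : Y = Y * F)
    (h : F * Eᵀ = 0) : ip X Y = 0 := by
  rw [ip]
  calc (Xᵀ * Y).trace = ((X*E)ᵀ * (Y*F)).trace := by rw [← hX, ← hY]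
  _ = (Eᵀ * (Xᵀ * (Y * F))).trace := by
        rw [Matrix.transpose_mul]
        simp only [Matrix.mul_assoc]
  _ = ((Xᵀ * (Y * F)) * Eᵀ).trace := Matrix.trace_mul_comm _ _
  _ = ((Xᵀ * Y) * (F * Eᵀ)).trace := by simp only [Matrix.mul_assoc]
  _ = 0 := by rw [h]; simp

lemma dot_mulVec_t (M : Matrix n n ℝ) (u v : n → ℝ) :
    u ⬝ᵥ M.mulVec v = (Mᵀ.mulVec u) ⬝ᵥ v := by
  simp only [dotProduct, Matrix.mulVec, Matrix.transpose_apply, Finset.mul_sum,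
    Finset.sum_mul]
  rw [Finset.sum_comm]
  exact Finset.sum_congr rfl fun i _ => Finset.sum_congr rfl fun j _ => by ring

lemma dot_nonneg (v : n → ℝ) : 0 ≤ v ⬝ᵥ v :=
  Finset.sum_nonneg fun i _ => mul_self_nonneg _

lemma dot_sq_le (u v : n → ℝ) : (u ⬝ᵥ v)^2 ≤ (u ⬝ᵥ u) * (v ⬝ᵥ v) := by
  simpa [dotProduct, sq] using Finset.sum_mul_sq_le_sq_mul_sq Finset.univ u v

lemma mulVec_dot_le (S : Matrix n n ℝ) (v : n → ℝ) :
    (S.mulVec v) ⬝ᵥ (S.mulVec v) ≤ ip S S * (v ⬝ᵥ v) := by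
  rw [ip_eq_sum]
  simp only [dotProduct, Matrix.mulVec]
  rw [Finset.sum_mul]
  refine Finset.sum_le_sum fun i _ => ?_
  have h := Finset.sum_mul_sq_le_sq_mul_sq Finset.univ (fun j => S i j) v
  calc (∑ j, S i j * v j) * (∑ j, S i j * v j) = (∑ j, S i j * v j)^2 := (sq _).symm
  _ ≤ (∑ j, (S i j)^2) * (∑ j, (v j)^2) := h
  _ = (∑ j, S i j * S i j) * (∑ j, v j * v j) := by simp [sq]

lemma quad_bound (S : Matrix n n ℝ) (v : n → ℝ) (hv : v ⬝ᵥ v ≤ 1) :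
    (v ⬝ᵥ S.mulVec v)^2 ≤ ip S S := by
  have h1 := dot_sq_le v (S.mulVec v)
  have h2 := mulVec_dot_le S v
  have h3 := dot_nonneg v
  have h4 := dot_nonneg (S.mulVec v)
  have h5 : (0:ℝ) ≤ ip S S := ip_nonneg S
  calc (v ⬝ᵥ S.mulVec v)^2 ≤ (v ⬝ᵥ v) * ((S.mulVec v) ⬝ᵥ (S.mulVec v)) := h1
  _ ≤ (v ⬝ᵥ v) * (ip S S * (v ⬝ᵥ v)) := mul_le_mul_of_nonneg_left h2 h3
  _ = ip S S * ((v ⬝ᵥ v) * (v ⬝ᵥ v)) := by ring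
  _ ≤ ip S S * 1 := mul_le_mul_of_nonneg_left (by nlinarith) h5
  _ = ip S S := mul_one _


lemma trace4_eq_ip (Z : Matrix n n ℝ) (hZ : Zᵀ = Z) : (Z*Z*Z*Z).trace = ip (Z*Z) (Z*Z) := by
  rw [ip, Matrix.transpose_mul, hZ]
  simp only [Matrix.mul_assoc]

section WithOne
variable [DecidableEq n]

lemma rabs (X E : Matrix n n ℝ) (hE : E*E = E) : X*E = (X*E)*E := by
  rw [Matrix.mul_assoc, hE]

lemma labs2 (E X Y : Matrix n n ℝ) (hE : E*E = E) : E*X*Y = E*(E*X*Y) := by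
  conv_rhs => rw [← Matrix.mul_assoc, ← Matrix.mul_assoc, hE]

lemma habs (E X : Matrix n n ℝ) (hE : E*E = E) : E*(E*X) = E*X := by
  rw [← Matrix.mul_assoc, hE]

lemma pyth (P M : Matrix n n ℝ) (hPt : Pᵀ = P) (hP2 : P*P = P) :
    ip (P*M*P) (P*M*P) + ip ((1-P)*M*(1-P)) ((1-P)*M*(1-P)) ≤ ip M M := by
  set Q := 1 - P with hQdef
  have hQt : Qᵀ = Q := by rw [hQdef, Matrix.transpose_sub, Matrix.transpose_one, hPt]
  have hQP : Q * P = 0 := by rw [hQdef, Matrix.sub_mul, Matrix.one_mul, hP2, sub_self]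
  have hPQ : P * Q = 0 := by rw [hQdef, Matrix.mul_sub, Matrix.mul_one, hP2, sub_self]
  have hQ2 : Q * Q = Q := by
    rw [hQdef, Matrix.sub_mul, Matrix.one_mul, Matrix.mul_sub, Matrix.mul_one, hP2]
    abel
  have hdec : M = P*M*P + P*M*Q + (Q*M*P + Q*M*Q) := by
    have h1 : P + Q = 1 := by rw [hQdef]; abel
    calc M = (P+Q) * M * (P+Q) := by rw [h1, Matrix.one_mul, Matrix.mul_one]
    _ = _ := by
      simp only [Matrix.add_mul, Matrix.mul_add]
      abel
  have hPQt : Q * Pᵀ = 0 := by rw [hPt]; exact hQP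
  have hQPt : P * Qᵀ = 0 := by rw [hQt]; exact hPQ
  have hPQl : Pᵀ * Q = 0 := by rw [hPt]; exact hPQ
  have hQPl : Qᵀ * P = 0 := by rw [hQt]; exact hQP
  have zab : ip (P*M*P) (P*M*Q) = 0 :=
    ip_zero_right_of _ _ P Q (rabs (P*M) P hP2) (rabs (P*M) Q hQ2) hPQt
  have zba : ip (P*M*Q) (P*M*P) = 0 :=
    ip_zero_right_of _ _ Q P (rabs (P*M) Q hQ2) (rabs (P*M) P hP2) hQPt
  have zcd : ip (Q*M*P) (Q*M*Q) = 0 :=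
    ip_zero_right_of _ _ P Q (rabs (Q*M) P hP2) (rabs (Q*M) Q hQ2) hPQt
  have zdc : ip (Q*M*Q) (Q*M*P) = 0 :=
    ip_zero_right_of _ _ Q P (rabs (Q*M) Q hQ2) (rabs (Q*M) P hP2) hQPt
  have zac : ip (P*M*P) (Q*M*P) = 0 :=
    ip_zero_left_of _ _ P Q (labs2 P M P hP2) (labs2 Q M P hQ2) hPQl
  have zca : ip (Q*M*P) (P*M*P) = 0 :=
    ip_zero_left_of _ _ Q P (labs2 Q M P hQ2) (labs2 P M P hP2) hQPl
  have zad : ip (P*M*P) (Q*M*Q) = 0 :=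
    ip_zero_left_of _ _ P Q (labs2 P M P hP2) (labs2 Q M Q hQ2) hPQl
  have zda : ip (Q*M*Q) (P*M*P) = 0 :=
    ip_zero_left_of _ _ Q P (labs2 Q M Q hQ2) (labs2 P M P hP2) hQPl
  have zbc : ip (P*M*Q) (Q*M*P) = 0 :=
    ip_zero_left_of _ _ P Q (labs2 P M Q hP2) (labs2 Q M P hQ2) hPQl
  have zcb : ip (Q*M*P) (P*M*Q) = 0 :=
    ip_zero_left_of _ _ Q P (labs2 Q M P hQ2) (labs2 P M Q hP2) hQPl
  have zbd : ip (P*M*Q) (Q*M*Q) = 0 :=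
    ip_zero_left_of _ _ P Q (labs2 P M Q hP2) (labs2 Q M Q hQ2) hPQl
  have zdb : ip (Q*M*Q) (P*M*Q) = 0 :=
    ip_zero_left_of _ _ Q P (labs2 Q M Q hQ2) (labs2 P M Q hP2) hQPl
  have expand : ip M M = ip (P*M*P) (P*M*P) + ip (P*M*Q) (P*M*Q)
      + ip (Q*M*P) (Q*M*P) + ip (Q*M*Q) (Q*M*Q) := by
    conv_lhs => rw [hdec]
    simp only [ip_add_left, ip_add_right, zab, zba, zcd, zdc, zac, zca, zad, zda, zbc,
      zcb, zbd, zdb]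
    ring
  rw [expand]
  have h1 := ip_nonneg (P*M*Q)
  have h2 := ip_nonneg (Q*M*P)
  linarith

set_option maxHeartbeats 1000000 in
lemma core (Z P : Matrix n n ℝ) (f : n → ℝ)
    (hZ : Zᵀ = Z) (hPt : Pᵀ = P) (hP2 : P*P = P) (hf : f ⬝ᵥ f ≤ 1)
    {ε : ℝ} (hε : 0 < ε)
    (hw : ε < |f ⬝ᵥ Z.mulVec f - f ⬝ᵥ ((P*Z*P).mulVec f)|) :
    ((P*Z*P)*(P*Z*P)*(P*Z*P)*(P*Z*P)).trace + ε^4/100 < (Z*Z*Z*Z).trace := by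
  set Q : Matrix n n ℝ := 1 - P with hQdef
  have hQt : Qᵀ = Q := by rw [hQdef, Matrix.transpose_sub, Matrix.transpose_one, hPt]
  have hQP : Q * P = 0 := by rw [hQdef, Matrix.sub_mul, Matrix.one_mul, hP2, sub_self]
  have hPQ : P * Q = 0 := by rw [hQdef, Matrix.mul_sub, Matrix.mul_one, hP2, sub_self]
  have hQ2 : Q * Q = Q := by
    rw [hQdef, Matrix.sub_mul, Matrix.one_mul, Matrix.mul_sub, Matrix.mul_one, hP2]; abel
  have hPQ1 : P + Q = 1 := by rw [hQdef]; abel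
  have hAt : (P*Z*P)ᵀ = P*Z*P := by
    simp only [Matrix.transpose_mul, hPt, hZ, Matrix.mul_assoc]
  have hDt : (Q*Z*Q)ᵀ = Q*Z*Q := by
    simp only [Matrix.transpose_mul, hQt, hZ, Matrix.mul_assoc]
  have hCt : (P*Z*Q)ᵀ = Q*Z*P := by
    simp only [Matrix.transpose_mul, hQt, hPt, hZ, Matrix.mul_assoc]
  -- block identities
  have hAA : (P*Z*P)*(P*Z*P) = P*(Z*(P*(Z*P))) := by
    simp only [Matrix.mul_assoc]; rw [habs P (Z*P) hP2]
  have hCC : (P*Z*Q)*(P*Z*Q)ᵀ = P*(Z*(Q*(Z*P))) := by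
    rw [hCt]; simp only [Matrix.mul_assoc]; rw [habs Q (Z*P) hQ2]
  have hblk1 : P*(Z*Z)*P = (P*Z*P)*(P*Z*P) + (P*Z*Q)*(P*Z*Q)ᵀ := by
    rw [hAA, hCC]
    calc P*(Z*Z)*P = P*(Z*((P+Q)*(Z*P))) := by
          rw [hPQ1, Matrix.one_mul]; simp only [Matrix.mul_assoc]
    _ = _ := by rw [Matrix.add_mul, Matrix.mul_add, Matrix.mul_add]
  have hDD : (Q*Z*Q)*(Q*Z*Q) = Q*(Z*(Q*(Z*Q))) := by
    simp only [Matrix.mul_assoc]; rw [habs Q (Z*Q) hQ2]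
  have hCtC : (P*Z*Q)ᵀ*(P*Z*Q) = Q*(Z*(P*(Z*Q))) := by
    rw [hCt]; simp only [Matrix.mul_assoc]; rw [habs P (Z*Q) hP2]
  have hblk2 : Q*(Z*Z)*Q = (Q*Z*Q)*(Q*Z*Q) + (P*Z*Q)ᵀ*(P*Z*Q) := by
    rw [hDD, hCtC]
    calc Q*(Z*Z)*Q = Q*(Z*((Q+P)*(Z*Q))) := by
          rw [show Q+P = 1 from by rw [hQdef]; abel, Matrix.one_mul]
          simp only [Matrix.mul_assoc]
    _ = _ := by rw [Matrix.add_mul, Matrix.mul_add, Matrix.mul_add]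
  have hpy : ip (P*(Z*Z)*P) (P*(Z*Z)*P) + ip (Q*(Z*Z)*Q) (Q*(Z*Z)*Q) ≤ ip (Z*Z) (Z*Z) := by
    have h := pyth P (Z*Z) hPt hP2
    rw [← hQdef] at h
    exact h
  have e1 : ip ((P*Z*P)*(P*Z*P) + (P*Z*Q)*(P*Z*Q)ᵀ) ((P*Z*P)*(P*Z*P) + (P*Z*Q)*(P*Z*Q)ᵀ)
      = ip ((P*Z*P)*(P*Z*P)) ((P*Z*P)*(P*Z*P)) + 2*ip ((P*Z*P)*(P*Z*P)) ((P*Z*Q)*(P*Z*Q)ᵀ)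
        + ip ((P*Z*Q)*(P*Z*Q)ᵀ) ((P*Z*Q)*(P*Z*Q)ᵀ) := by
    rw [ip_add_left, ip_add_right, ip_add_right, ip_comm ((P*Z*Q)*(P*Z*Q)ᵀ) ((P*Z*P)*(P*Z*P))]
    ring
  have e2 : ip ((Q*Z*Q)*(Q*Z*Q) + (P*Z*Q)ᵀ*(P*Z*Q)) ((Q*Z*Q)*(Q*Z*Q) + (P*Z*Q)ᵀ*(P*Z*Q))
      = ip ((Q*Z*Q)*(Q*Z*Q)) ((Q*Z*Q)*(Q*Z*Q)) + 2*ip ((Q*Z*Q)*(Q*Z*Q)) ((P*Z*Q)ᵀ*(P*Z*Q))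
        + ip ((P*Z*Q)ᵀ*(P*Z*Q)) ((P*Z*Q)ᵀ*(P*Z*Q)) := by
    rw [ip_add_left, ip_add_right, ip_add_right, ip_comm ((P*Z*Q)ᵀ*(P*Z*Q)) ((Q*Z*Q)*(Q*Z*Q))]
    ring
  have hAAt : ((P*Z*P)*(P*Z*P))ᵀ = (P*Z*P)*(P*Z*P) := by rw [Matrix.transpose_mul, hAt]
  have hACt : ((P*Z*P)*(P*Z*Q))ᵀ = (P*Z*Q)ᵀ*(P*Z*P) := by rw [Matrix.transpose_mul, hAt]
  have hDDt : ((Q*Z*Q)*(Q*Z*Q))ᵀ = (Q*Z*Q)*(Q*Z*Q) := by rw [Matrix.transpose_mul, hDt]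
  have hDCtt : ((Q*Z*Q)*(P*Z*Q)ᵀ)ᵀ = (P*Z*Q)*(Q*Z*Q) := by
    rw [Matrix.transpose_mul, Matrix.transpose_transpose, hDt]
  have hCtCt : ((P*Z*Q)ᵀ*(P*Z*Q))ᵀ = (P*Z*Q)ᵀ*(P*Z*Q) := by
    rw [Matrix.transpose_mul, Matrix.transpose_transpose]
  have hCCt : ((P*Z*Q)*(P*Z*Q)ᵀ)ᵀ = (P*Z*Q)*(P*Z*Q)ᵀ := by
    rw [Matrix.transpose_mul, Matrix.transpose_transpose]
  have cross1 : ip ((P*Z*P)*(P*Z*P)) ((P*Z*Q)*(P*Z*Q)ᵀ)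
      = ip ((P*Z*P)*(P*Z*Q)) ((P*Z*P)*(P*Z*Q)) := by
    rw [ip, ip, hAAt, hACt]
    calc ((P*Z*P)*(P*Z*P)*((P*Z*Q)*(P*Z*Q)ᵀ)).trace
        = ((((P*Z*P)*(P*Z*P))*(P*Z*Q))*(P*Z*Q)ᵀ).trace := by simp only [Matrix.mul_assoc]
      _ = ((P*Z*Q)ᵀ*(((P*Z*P)*(P*Z*P))*(P*Z*Q))).trace := Matrix.trace_mul_comm _ _
      _ = ((P*Z*Q)ᵀ*(P*Z*P)*((P*Z*P)*(P*Z*Q))).trace := by simp only [Matrix.mul_assoc]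
  have cross2 : ip ((Q*Z*Q)*(Q*Z*Q)) ((P*Z*Q)ᵀ*(P*Z*Q))
      = ip ((Q*Z*Q)*(P*Z*Q)ᵀ) ((Q*Z*Q)*(P*Z*Q)ᵀ) := by
    rw [ip, ip, hDDt, hDCtt]
    calc ((Q*Z*Q)*(Q*Z*Q)*((P*Z*Q)ᵀ*(P*Z*Q))).trace
        = ((((Q*Z*Q)*(Q*Z*Q))*(P*Z*Q)ᵀ)*(P*Z*Q)).trace := by simp only [Matrix.mul_assoc]
      _ = ((P*Z*Q)*(((Q*Z*Q)*(Q*Z*Q))*(P*Z*Q)ᵀ)).trace := Matrix.trace_mul_comm _ _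
      _ = ((P*Z*Q)*(Q*Z*Q)*((Q*Z*Q)*(P*Z*Q)ᵀ)).trace := by simp only [Matrix.mul_assoc]
  have gain : ip ((P*Z*P)*(P*Z*P)) ((P*Z*P)*(P*Z*P)) + ip ((Q*Z*Q)*(Q*Z*Q)) ((Q*Z*Q)*(Q*Z*Q))
      + ip ((P*Z*Q)ᵀ*(P*Z*Q)) ((P*Z*Q)ᵀ*(P*Z*Q)) ≤ ip (Z*Z) (Z*Z) := by
    rw [hblk1, hblk2, e1, e2] at hpy
    have n1 := ip_nonneg ((P*Z*P)*(P*Z*Q))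
    have n2 := ip_nonneg ((Q*Z*Q)*(P*Z*Q)ᵀ)
    have n3 := ip_nonneg ((P*Z*Q)*(P*Z*Q)ᵀ)
    rw [cross1, cross2] at hpy
    linarith
  -- vectors
  set u := P.mulVec f with hu
  set g := Q.mulVec f with hg
  have hPu : P.mulVec u = u := by rw [hu, Matrix.mulVec_mulVec, hP2]
  have hQg : Q.mulVec g = g := by rw [hg, Matrix.mulVec_mulVec, hQ2]
  have hug : u + g = f := by rw [hu, hg, ← Matrix.add_mulVec, hPQ1, Matrix.one_mulVec]
  have huu : u ⬝ᵥ u = u ⬝ᵥ f := by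
    nth_rewrite 2 [hu]
    rw [dot_mulVec_t, hPt, hPu]
  have hgg : g ⬝ᵥ g = g ⬝ᵥ f := by
    nth_rewrite 2 [hg]
    rw [dot_mulVec_t, hQt, hQg]
  have hsum : u ⬝ᵥ u + g ⬝ᵥ g = f ⬝ᵥ f := by
    rw [huu, hgg, ← add_dotProduct, hug]
  have hu1 : u ⬝ᵥ u ≤ 1 := by have := dot_nonneg g; linarith
  have hg1 : g ⬝ᵥ g ≤ 1 := by have := dot_nonneg u; linarith
  -- witness decomposition
  have hfZf : f ⬝ᵥ Z.mulVec f = u ⬝ᵥ Z.mulVec u + (2*(u ⬝ᵥ Z.mulVec g) + g ⬝ᵥ Z.mulVec g) := by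
    have hsym : g ⬝ᵥ Z.mulVec u = u ⬝ᵥ Z.mulVec g := by
      rw [dot_mulVec_t, hZ, dotProduct_comm]
    conv_lhs => rw [← hug]
    rw [Matrix.mulVec_add, add_dotProduct, dotProduct_add, dotProduct_add,
      hsym]
    ring
  have hfAf : f ⬝ᵥ ((P*Z*P).mulVec f) = u ⬝ᵥ Z.mulVec u := by
    rw [← Matrix.mulVec_mulVec, ← Matrix.mulVec_mulVec, dot_mulVec_t, hPt, ← hu]
  have ha : u ⬝ᵥ ((P*Z*Q).mulVec g) = u ⬝ᵥ Z.mulVec g := by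
    rw [← Matrix.mulVec_mulVec, ← Matrix.mulVec_mulVec, hQg, dot_mulVec_t, hPt, hPu]
  have hb : g ⬝ᵥ ((Q*Z*Q).mulVec g) = g ⬝ᵥ Z.mulVec g := by
    rw [← Matrix.mulVec_mulVec, ← Matrix.mulVec_mulVec, hQg, dot_mulVec_t, hQt, hQg]
  have hwit : f ⬝ᵥ Z.mulVec f - f ⬝ᵥ ((P*Z*P).mulVec f)
      = 2*(u ⬝ᵥ ((P*Z*Q).mulVec g)) + g ⬝ᵥ ((Q*Z*Q).mulVec g) := by
    rw [hfZf, hfAf, ha, hb]; ring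
  -- quadratic bounds
  have haCS : (u ⬝ᵥ ((P*Z*Q).mulVec g))^2 ≤ u ⬝ᵥ (((P*Z*Q)*(P*Z*Q)ᵀ).mulVec u) := by
    rw [dot_mulVec_t]
    have h2 := dot_sq_le ((P*Z*Q)ᵀ.mulVec u) g
    have h3 : ((P*Z*Q)ᵀ.mulVec u) ⬝ᵥ ((P*Z*Q)ᵀ.mulVec u)
        = u ⬝ᵥ (((P*Z*Q)*(P*Z*Q)ᵀ).mulVec u) := by
      rw [dot_mulVec_t, Matrix.transpose_transpose, Matrix.mulVec_mulVec,
        dotProduct_comm]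
    have h4 : 0 ≤ ((P*Z*Q)ᵀ.mulVec u) ⬝ᵥ ((P*Z*Q)ᵀ.mulVec u) := dot_nonneg _
    calc (((P*Z*Q)ᵀ.mulVec u) ⬝ᵥ g)^2
        ≤ (((P*Z*Q)ᵀ.mulVec u) ⬝ᵥ ((P*Z*Q)ᵀ.mulVec u)) * (g ⬝ᵥ g) := h2
      _ ≤ (((P*Z*Q)ᵀ.mulVec u) ⬝ᵥ ((P*Z*Q)ᵀ.mulVec u)) * 1 :=
          mul_le_mul_of_nonneg_left hg1 h4
      _ = u ⬝ᵥ (((P*Z*Q)*(P*Z*Q)ᵀ).mulVec u) := by rw [mul_one, h3]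
  have haQ : (u ⬝ᵥ (((P*Z*Q)*(P*Z*Q)ᵀ).mulVec u))^2
      ≤ ip ((P*Z*Q)*(P*Z*Q)ᵀ) ((P*Z*Q)*(P*Z*Q)ᵀ) := quad_bound _ u hu1
  have hipcyc : ip ((P*Z*Q)*(P*Z*Q)ᵀ) ((P*Z*Q)*(P*Z*Q)ᵀ)
      = ip ((P*Z*Q)ᵀ*(P*Z*Q)) ((P*Z*Q)ᵀ*(P*Z*Q)) := by
    rw [ip, ip, hCCt, hCtCt]
    calc ((P*Z*Q)*(P*Z*Q)ᵀ*((P*Z*Q)*(P*Z*Q)ᵀ)).trace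
        = ((((P*Z*Q)*(P*Z*Q)ᵀ)*(P*Z*Q))*(P*Z*Q)ᵀ).trace := by simp only [Matrix.mul_assoc]
      _ = ((P*Z*Q)ᵀ*(((P*Z*Q)*(P*Z*Q)ᵀ)*(P*Z*Q))).trace := Matrix.trace_mul_comm _ _
      _ = ((P*Z*Q)ᵀ*(P*Z*Q)*((P*Z*Q)ᵀ*(P*Z*Q))).trace := by simp only [Matrix.mul_assoc]
  have hbCS : (g ⬝ᵥ ((Q*Z*Q).mulVec g))^2 ≤ g ⬝ᵥ (((Q*Z*Q)*(Q*Z*Q)).mulVec g) := by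
    have h2 := dot_sq_le g ((Q*Z*Q).mulVec g)
    have h3 : ((Q*Z*Q).mulVec g) ⬝ᵥ ((Q*Z*Q).mulVec g)
        = g ⬝ᵥ (((Q*Z*Q)*(Q*Z*Q)).mulVec g) := by
      rw [dot_mulVec_t, hDt, Matrix.mulVec_mulVec, dotProduct_comm]
    have h4 : 0 ≤ ((Q*Z*Q).mulVec g) ⬝ᵥ ((Q*Z*Q).mulVec g) := dot_nonneg _
    calc (g ⬝ᵥ ((Q*Z*Q).mulVec g))^2
        ≤ (g ⬝ᵥ g) * (((Q*Z*Q).mulVec g) ⬝ᵥ ((Q*Z*Q).mulVec g)) := h2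
      _ ≤ 1 * (((Q*Z*Q).mulVec g) ⬝ᵥ ((Q*Z*Q).mulVec g)) :=
          mul_le_mul_of_nonneg_right hg1 h4
      _ = g ⬝ᵥ (((Q*Z*Q)*(Q*Z*Q)).mulVec g) := by rw [one_mul, h3]
  have hbQ : (g ⬝ᵥ (((Q*Z*Q)*(Q*Z*Q)).mulVec g))^2
      ≤ ip ((Q*Z*Q)*(Q*Z*Q)) ((Q*Z*Q)*(Q*Z*Q)) := quad_bound _ g hg1
  -- assemble
  set a := u ⬝ᵥ ((P*Z*Q).mulVec g) with hadef
  set b := g ⬝ᵥ ((Q*Z*Q).mulVec g) with hbdef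
  have ha4 : a^4 ≤ ip ((P*Z*Q)ᵀ*(P*Z*Q)) ((P*Z*Q)ᵀ*(P*Z*Q)) := by
    rw [← hipcyc]
    calc a^4 = (a^2)^2 := by ring
      _ ≤ (u ⬝ᵥ (((P*Z*Q)*(P*Z*Q)ᵀ).mulVec u))^2 := pow_le_pow_left₀ (sq_nonneg a) haCS 2
      _ ≤ _ := haQ
  have hb4 : b^4 ≤ ip ((Q*Z*Q)*(Q*Z*Q)) ((Q*Z*Q)*(Q*Z*Q)) := by
    calc b^4 = (b^2)^2 := by ring
      _ ≤ (g ⬝ᵥ (((Q*Z*Q)*(Q*Z*Q)).mulVec g))^2 := pow_le_pow_left₀ (sq_nonneg b) hbCS 2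
      _ ≤ _ := hbQ
  have hwabs : ε < 2*|a| + |b| := by
    rw [hwit] at hw
    calc ε < |2*a + b| := hw
    _ ≤ |2*a| + |b| := abs_add_le _ _
    _ = 2*|a| + |b| := by rw [abs_mul]; norm_num
  have hεa : ε^4 < (2*|a| + |b|)^4 := by
    have h := pow_lt_pow_left₀ hwabs hε.le (n := 4) (by norm_num)
    exact h
  have h100 : (2*|a| + |b|)^4 ≤ 100*(a^4 + b^4) := by
    have h1 : |a|^4 = a^4 := by rw [← abs_pow]; exact abs_of_nonneg (by positivity)
    have h2 : |b|^4 = b^4 := by rw [← abs_pow]; exact abs_of_nonneg (by positivity)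
    have hx := abs_nonneg a
    have hy := abs_nonneg b
    set x := |a| with hxd
    set y := |b| with hyd
    have f1 : 0 ≤ 3*x^4 - 4*x^3*y + y^4 := by
      have idd : (x-y)^2*(3*x^2+2*x*y+y^2) = 3*x^4 - 4*x^3*y + y^4 := by ring
      rw [← idd]
      exact mul_nonneg (sq_nonneg _) (by positivity)
    have f2 : 0 ≤ x^4 - 2*x^2*y^2 + y^4 := by
      have idd : (x^2-y^2)^2 = x^4 - 2*x^2*y^2 + y^4 := by ring
      rw [← idd]; exact sq_nonneg _
    have f3 : 0 ≤ 3*y^4 - 4*x*y^3 + x^4 := by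
      have idd : (y-x)^2*(3*y^2+2*x*y+x^2) = 3*y^4 - 4*x*y^3 + x^4 := by ring
      rw [← idd]
      exact mul_nonneg (sq_nonneg _) (by positivity)
    have hexp : (2*x+y)^4 = 16*x^4+32*x^3*y+24*x^2*y^2+8*x*y^3+y^4 := by ring
    have hx4 : 0 ≤ x^4 := by positivity
    have hy4 : 0 ≤ y^4 := by positivity
    rw [hexp, ← h1, ← h2]
    linarith
  have htr1 : (Z*Z*Z*Z).trace = ip (Z*Z) (Z*Z) := trace4_eq_ip Z hZ
  have htr2 : ((P*Z*P)*(P*Z*P)*(P*Z*P)*(P*Z*P)).trace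
      = ip ((P*Z*P)*(P*Z*P)) ((P*Z*P)*(P*Z*P)) := trace4_eq_ip _ hAt
  rw [htr1, htr2]
  linarith

end WithOne

section Proj
variable {κ : Type*} [Fintype κ] [DecidableEq κ]

def Pproj (π : n → κ) (m : n → ℝ) (μ : κ → ℝ) : Matrix n n ℝ :=
  Matrix.of fun i j => if π i = π j then Real.sqrt (m i) * Real.sqrt (m j) / μ (π i) else 0

lemma Pproj_symm (π : n → κ) (m : n → ℝ) (μ : κ → ℝ) : (Pproj π m μ)ᵀ = Pproj π m μ := by
  ext i j
  simp only [Matrix.transpose_apply, Pproj, Matrix.of_apply]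
  by_cases h : π i = π j
  · rw [if_pos h.symm, if_pos h, h]; ring
  · rw [if_neg (fun hh => h hh.symm), if_neg h]

lemma Pproj_idem (π : n → κ) (m : n → ℝ) (μ : κ → ℝ) (hm : ∀ i, 0 ≤ m i)
    (hμ : ∀ c, μ c = ∑ i, if π i = c then m i else 0) :
    Pproj π m μ * Pproj π m μ = Pproj π m μ := by
  ext i j
  simp only [Matrix.mul_apply, Pproj, Matrix.of_apply]
  by_cases h : π i = π j
  · have step : ∀ k, (if π i = π k then Real.sqrt (m i) * Real.sqrt (m k) / μ (π i) else 0) *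
        (if π k = π j then Real.sqrt (m k) * Real.sqrt (m j) / μ (π k) else 0)
        = (if π k = π i then m k else 0) *
          (Real.sqrt (m i) * Real.sqrt (m j) / (μ (π i) * μ (π i))) := by
      intro k
      by_cases hk : π k = π i
      · rw [if_pos hk.symm, if_pos (hk.trans h), if_pos hk, hk]
        have hss : Real.sqrt (m k) * Real.sqrt (m k) = m k := Real.mul_self_sqrt (hm k)
        calc Real.sqrt (m i) * Real.sqrt (m k) / μ (π i) *
              (Real.sqrt (m k) * Real.sqrt (m j) / μ (π i))
            = (Real.sqrt (m k) * Real.sqrt (m k)) *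
              (Real.sqrt (m i) * Real.sqrt (m j) / (μ (π i) * μ (π i))) := by ring
          _ = _ := by rw [hss]
      · rw [if_neg (fun hh => hk hh.symm), if_neg hk, zero_mul, zero_mul]
    rw [Finset.sum_congr rfl (fun k _ => step k), ← Finset.sum_mul, ← hμ (π i), if_pos h]
    rcases eq_or_ne (μ (π i)) 0 with h0 | h0
    · rw [h0]; simp
    · field_simp
  · rw [if_neg h]
    apply Finset.sum_eq_zero
    intro k _
    by_cases hk : π i = π k
    · rw [if_neg (show ¬ π k = π j from fun hh => h (hk.trans hh)), mul_zero]
    · rw [if_neg hk, zero_mul]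

lemma compress_apply (π : n → κ) (m : n → ℝ) (μ : κ → ℝ) (Z : n → n → ℝ) (N : κ → κ → ℝ)
    (hm : ∀ i, 0 ≤ m i)
    (hN : ∀ c c', N c c' =
      (∑ k, ∑ l, (if π k = c ∧ π l = c' then m k * m l * Z k l else 0)) / (μ c * μ c')) :
    Pproj π m μ * (Matrix.of fun i j => Real.sqrt (m i) * Real.sqrt (m j) * Z i j)
      * Pproj π m μ
    = Matrix.of fun i j => Real.sqrt (m i) * Real.sqrt (m j) * N (π i) (π j) := by
  ext i j
  simp only [Matrix.mul_apply, Pproj, Matrix.of_apply, Finset.sum_mul]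
  rw [hN]
  rw [Finset.sum_comm]
  have step : ∀ k l, (if π i = π k then Real.sqrt (m i) * Real.sqrt (m k) / μ (π i) else 0) *
        (Real.sqrt (m k) * Real.sqrt (m l) * Z k l) *
        (if π l = π j then Real.sqrt (m l) * Real.sqrt (m j) / μ (π l) else 0)
      = (if π k = π i ∧ π l = π j then m k * m l * Z k l else 0) *
        (Real.sqrt (m i) * Real.sqrt (m j) / (μ (π i) * μ (π j))) := by
    intro k l
    by_cases hk : π k = π i
    · by_cases hl : π l = π j
      · rw [if_pos hk.symm, if_pos hl, if_pos ⟨hk, hl⟩, hl]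
        have hsk : Real.sqrt (m k) * Real.sqrt (m k) = m k := Real.mul_self_sqrt (hm k)
        have hsl : Real.sqrt (m l) * Real.sqrt (m l) = m l := Real.mul_self_sqrt (hm l)
        calc Real.sqrt (m i) * Real.sqrt (m k) / μ (π i) *
              (Real.sqrt (m k) * Real.sqrt (m l) * Z k l) *
              (Real.sqrt (m l) * Real.sqrt (m j) / μ (π j))
            = ((Real.sqrt (m k) * Real.sqrt (m k)) * ((Real.sqrt (m l) * Real.sqrt (m l)) * Z k l)) *
              (Real.sqrt (m i) * Real.sqrt (m j) / (μ (π i) * μ (π j))) := by ring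
          _ = _ := by rw [hsk, hsl]; ring
      · rw [if_neg hl, mul_zero,
            if_neg (show ¬(π k = π i ∧ π l = π j) from fun hh => hl hh.2), zero_mul]
    · rw [if_neg (show ¬(π i = π k) from fun hh => hk hh.symm), zero_mul, zero_mul,
          if_neg (show ¬(π k = π i ∧ π l = π j) from fun hh => hk hh.1), zero_mul]
  calc ∑ k, ∑ l, (if π i = π k then Real.sqrt (m i) * Real.sqrt (m k) / μ (π i) else 0) *
        (Real.sqrt (m k) * Real.sqrt (m l) * Z k l) *
        (if π l = π j then Real.sqrt (m l) * Real.sqrt (m j) / μ (π l) else 0)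
      = ∑ k, ∑ l, (if π k = π i ∧ π l = π j then m k * m l * Z k l else 0) *
        (Real.sqrt (m i) * Real.sqrt (m j) / (μ (π i) * μ (π j))) :=
        Finset.sum_congr rfl fun k _ => Finset.sum_congr rfl fun l _ => step k l
    _ = (∑ k, ∑ l, (if π k = π i ∧ π l = π j then m k * m l * Z k l else 0)) *
        (Real.sqrt (m i) * Real.sqrt (m j) / (μ (π i) * μ (π j))) := by
        rw [Finset.sum_mul]
        exact Finset.sum_congr rfl fun k _ => (Finset.sum_mul _ _ _).symm
    _ = Real.sqrt (m i) * Real.sqrt (m j) *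
        ((∑ k, ∑ l, (if π k = π i ∧ π l = π j then m k * m l * Z k l else 0)) /
          (μ (π i) * μ (π j))) := by ring


end Proj

lemma sum3_perm {κ : Type*} [Fintype κ] (F : κ → κ → κ → ℝ) :
    ∑ j, ∑ k, ∑ l, F j k l = ∑ l, ∑ k, ∑ j, F j k l := by
  calc ∑ j, ∑ k, ∑ l, F j k l
      = ∑ j, ∑ l, ∑ k, F j k l := Finset.sum_congr rfl fun j _ => Finset.sum_comm
    _ = ∑ l, ∑ j, ∑ k, F j k l := Finset.sum_comm
    _ = ∑ l, ∑ k, ∑ j, F j k l := Finset.sum_congr rfl fun l _ => Finset.sum_comm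

lemma trace_mul4_sum (M : Matrix n n ℝ) :
    (M*M*M*M).trace = ∑ i, ∑ j, ∑ k, ∑ l, M i j * M j k * M k l * M l i := by
  have h : ∀ i, (M*M*M*M) i i = ∑ l, ∑ k, ∑ j, M i j * M j k * M k l * M l i := by
    intro i
    simp only [Matrix.mul_apply, Finset.sum_mul]
  calc (M*M*M*M).trace = ∑ i, (M*M*M*M) i i := rfl
    _ = ∑ i, ∑ l, ∑ k, ∑ j, M i j * M j k * M k l * M l i :=
        Finset.sum_congr rfl fun i _ => h i
    _ = _ := Finset.sum_congr rfl fun i _ => (sum3_perm _).symm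

lemma dot_mulVec_sum (M : Matrix n n ℝ) (f : n → ℝ) :
    f ⬝ᵥ M.mulVec f = ∑ i, ∑ j, f i * M i j * f j := by
  simp only [dotProduct, Matrix.mulVec, Finset.mul_sum]
  exact Finset.sum_congr rfl fun i _ => Finset.sum_congr rfl fun j _ => by ring

lemma sum_fn4 {κ : Type*} [Fintype κ] (F : κ → κ → κ → κ → ℝ) :
    ∑ c : Fin 4 → κ, F (c 0) (c 1) (c 2) (c 3) = ∑ i, ∑ j, ∑ k, ∑ l, F i j k l := by
  calc ∑ c : Fin 4 → κ, F (c 0) (c 1) (c 2) (c 3)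
      = ∑ p : κ × κ × κ × κ, F p.1 p.2.1 p.2.2.1 p.2.2.2 := by
        refine Fintype.sum_equiv
          ⟨fun c => (c 0, c 1, c 2, c 3), fun p => ![p.1, p.2.1, p.2.2.1, p.2.2.2], ?_, ?_⟩ _ _ ?_
        · intro c; funext x; fin_cases x <;> rfl
        · intro p; rfl
        · intro c; rfl
    _ = _ := by simp only [Fintype.sum_prod_type]


instance : IsProbabilityMeasure (volume : Measure UI) := by
  constructor
  rw [Measure.Subtype.volume_univ (measurableSet_Icc.nullMeasurableSet)]
  simp [Real.volume_Icc]

lemma sum_cells_vol {κ : Type*} [Fintype κ] (Q : UI → κ) (hQ : ∀ c, MeasurableSet (Q ⁻¹' {c})) :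
    ∑ c, (volume (Q ⁻¹' {c})).toReal = 1 := by
  classical
  have hdisj : ((Finset.univ : Finset κ) : Set κ).PairwiseDisjoint (fun c => Q ⁻¹' {c}) := by
    intro a _ b _ hab
    refine Set.disjoint_left.mpr fun x hxa hxb => hab ?_
    simp only [Set.mem_preimage, Set.mem_singleton_iff] at hxa hxb
    rw [← hxa, ← hxb]
  have hunion : ⋃ c ∈ (Finset.univ : Finset κ), Q ⁻¹' {c} = Set.univ := by
    ext x; simp
  have hmeq : volume (⋃ c ∈ (Finset.univ : Finset κ), Q ⁻¹' {c})
      = ∑ c, volume (Q ⁻¹' {c}) := measure_biUnion_finset hdisj (fun c _ => hQ c)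
  rw [hunion, measure_univ] at hmeq
  rw [← ENNReal.toReal_sum (fun c _ => measure_ne_top _ _), ← hmeq]
  rfl

lemma cycle4_step {κ : Type*} [Fintype κ] (Q : UI → κ) (hQ : ∀ c, MeasurableSet (Q ⁻¹' {c}))
    (s : κ → κ → ℝ) :
    ∫ x : Fin 4 → UI, ∏ i, s (Q (x i)) (Q (x (finRotate 4 i)))
      = ∑ i, ∑ j, ∑ k, ∑ l, ((volume (Q ⁻¹' {i})).toReal * (volume (Q ⁻¹' {j})).toReal *
          (volume (Q ⁻¹' {k})).toReal * (volume (Q ⁻¹' {l})).toReal)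
          * (s i j * s j k * s k l * s l i) := by
  classical
  have hmeasc : ∀ c : Fin 4 → κ, MeasurableSet (Set.pi Set.univ fun r => Q ⁻¹' {c r}) :=
    fun c => MeasurableSet.univ_pi fun r => hQ (c r)
  have hpoint : (fun x : Fin 4 → UI => ∏ i, s (Q (x i)) (Q (x (finRotate 4 i))))
      = fun x => ∑ c : Fin 4 → κ, (Set.pi Set.univ fun r => Q ⁻¹' {c r}).indicator
          (fun _ => ∏ i, s (c i) (c (finRotate 4 i))) x := by
    funext x
    rw [Finset.sum_eq_single_of_mem (fun r => Q (x r)) (Finset.mem_univ _)]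
    · rw [Set.indicator_of_mem]
      exact fun r _ => rfl
    · intro c _ hne
      rw [Set.indicator_of_notMem]
      intro hmem
      exact hne (funext fun r => ((hmem r (Set.mem_univ r)) : Q (x r) = c r).symm)
  rw [hpoint, integral_finset_sum _
    (fun c _ => (integrable_const _).indicator (hmeasc c))]
  have heval : ∀ c : Fin 4 → κ,
      ∫ x : Fin 4 → UI, (Set.pi Set.univ fun r => Q ⁻¹' {c r}).indicator
        (fun _ => ∏ i, s (c i) (c (finRotate 4 i))) x
      = (∏ r, (volume (Q ⁻¹' {c r})).toReal) * ∏ i, s (c i) (c (finRotate 4 i)) := by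
    intro c
    rw [integral_indicator_const _ (hmeasc c), measureReal_def, volume_pi_pi, ENNReal.toReal_prod, smul_eq_mul]
  rw [Finset.sum_congr rfl (fun c _ => heval c)]
  have hform : ∀ c : Fin 4 → κ,
      (∏ r, (volume (Q ⁻¹' {c r})).toReal) * ∏ i, s (c i) (c (finRotate 4 i))
      = ((volume (Q ⁻¹' {c 0})).toReal * (volume (Q ⁻¹' {c 1})).toReal *
          (volume (Q ⁻¹' {c 2})).toReal * (volume (Q ⁻¹' {c 3})).toReal)
        * (s (c 0) (c 1) * s (c 1) (c 2) * s (c 2) (c 3) * s (c 3) (c 0)) := by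
    intro c
    rw [Fin.prod_univ_four, Fin.prod_univ_four]
    simp only [finRotate_succ_apply]
    rfl
  rw [Finset.sum_congr rfl (fun c _ => hform c)]
  exact sum_fn4 (fun i j k l => ((volume (Q ⁻¹' {i})).toReal * (volume (Q ⁻¹' {j})).toReal *
    (volume (Q ⁻¹' {k})).toReal * (volume (Q ⁻¹' {l})).toReal)
    * (s i j * s j k * s k l * s l i))


variable (V : UI → UI → ℝ)

lemma intOn (hVm : Measurable (Function.uncurry V)) {C : ℝ} (hVb : ∀ x y, |V x y| ≤ C)
    (x : UI) (T : Set UI) : IntegrableOn (fun y => V x y) T := by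
  refine Integrable.mono' (integrable_const C)
    (Measurable.aestronglyMeasurable hVm.of_uncurry_left)
    (Filter.Eventually.of_forall fun y => by simpa using hVb x y)

lemma smInt (hVm : Measurable (Function.uncurry V)) (T : Set UI) :
    MeasureTheory.StronglyMeasurable (fun x => ∫ y in T, V x y) :=
  (hVm.stronglyMeasurable).integral_prod_right'

lemma intOuter (hVm : Measurable (Function.uncurry V)) {C : ℝ} (hVb : ∀ x y, |V x y| ≤ C)
    (S T : Set UI) : IntegrableOn (fun x => ∫ y in T, V x y) S := by
  refine Integrable.mono' (integrable_const (C * (volume T).toReal))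
    ((smInt V hVm T).aestronglyMeasurable)
    (Filter.Eventually.of_forall fun x => ?_)
  exact norm_setIntegral_le_of_norm_le_const (measure_lt_top _ _)
    (fun y _ => by simpa using hVb x y)

lemma int_eq_stepAvg (A B : Set UI) :
    ∫ x in A, ∫ y in B, V x y = (volume A).toReal * (volume B).toReal * stepAvg V A B := by
  rcases eq_or_ne (volume A) 0 with hA0 | hA0
  · rw [Measure.restrict_eq_zero.mpr hA0, integral_zero_measure, hA0]
    simp
  rcases eq_or_ne (volume B) 0 with hB0 | hB0
  · have hz : ∀ x : UI, ∫ y in B, V x y = 0 := fun x => by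
      rw [Measure.restrict_eq_zero.mpr hB0, integral_zero_measure]
    simp only [hz, integral_zero, hB0]
    simp
  · have h : (volume A).toReal * (volume B).toReal ≠ 0 :=
      mul_ne_zero (ENNReal.toReal_ne_zero.mpr ⟨hA0, measure_ne_top _ _⟩)
        (ENNReal.toReal_ne_zero.mpr ⟨hB0, measure_ne_top _ _⟩)
    rw [stepAvg, mul_comm, div_mul_cancel₀ _ h]

lemma stepAvg_symm (hVm : Measurable (Function.uncurry V)) {C : ℝ} (hVb : ∀ x y, |V x y| ≤ C)
    (hsym : ∀ x y, V x y = V y x) (A B : Set UI) : stepAvg V A B = stepAvg V B A := by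
  unfold stepAvg
  rw [mul_comm ((volume B).toReal)]
  congr 1
  have hint : Integrable (Function.uncurry V) ((volume.restrict A).prod (volume.restrict B)) :=
    Integrable.mono' (integrable_const C) hVm.aestronglyMeasurable
      (Filter.Eventually.of_forall fun p => (Real.norm_eq_abs _).trans_le (hVb p.1 p.2))
  calc ∫ x in A, ∫ y in B, V x y = ∫ y in B, ∫ x in A, V x y := integral_integral_swap hint
  _ = ∫ y in B, ∫ x in A, V y x := by
      refine integral_congr_ae (Filter.Eventually.of_forall fun y => ?_)
      exact integral_congr_ae (Filter.Eventually.of_forall fun x => hsym x y)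

lemma stepAvg_abs_le_one (hVm : Measurable (Function.uncurry V)) (hVb : ∀ x y, |V x y| ≤ 1)
    (A B : Set UI) : |stepAvg V A B| ≤ 1 := by
  have hIin : ∀ x : UI, ‖∫ y in B, V x y‖ ≤ 1 * (volume B).toReal := fun x =>
    norm_setIntegral_le_of_norm_le_const (measure_lt_top _ _)
      (fun y _ => by simpa using hVb x y)
  have hI : |∫ x in A, ∫ y in B, V x y| ≤ (1 * (volume B).toReal) * (volume A).toReal := by
    refine norm_setIntegral_le_of_norm_le_const (measure_lt_top _ _)
      (fun x _ => hIin x)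
  have ha : (0:ℝ) ≤ (volume A).toReal := ENNReal.toReal_nonneg
  have hb : (0:ℝ) ≤ (volume B).toReal := ENNReal.toReal_nonneg
  unfold stepAvg
  rcases eq_or_ne ((volume A).toReal * (volume B).toReal) 0 with h | h
  · rw [h, div_zero, abs_zero]; norm_num
  · rw [abs_div, abs_of_nonneg (mul_nonneg ha hb)]
    rw [div_le_one (lt_of_le_of_ne (mul_nonneg ha hb) (Ne.symm h))]
    calc |∫ x in A, ∫ y in B, V x y| ≤ (1 * (volume B).toReal) * (volume A).toReal := hI
    _ = (volume A).toReal * (volume B).toReal := by ring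


end PumpAux

end AuxSection

open Matrix PumpAux

set_option maxHeartbeats 2000000

/-- Index pumping for the `C₄`-density: if `X` witnesses
`|∫_{X×X} (W − W^{⋈P})| > ε`, then refining the finite partition `P` by `{X, Xᶜ}`
increases the `C₄`-density by more than `ε⁴/100`. The refined partition `P*` is the
colouring `x ↦ (P x, x ∈ X)`. -/
theorem pumping_C4 (ε : ℝ) (hε : 0 < ε) (W : UI → UI → ℝ) (hW : IsGraphon W)
    (k : ℕ) (P : UI → Fin k) (hP : ∀ c, MeasurableSet (P ⁻¹' {c}))
    (X : Set UI) (hX : MeasurableSet X)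
    (hwitness : ε < |∫ x in X, ∫ y in X, (W x y - stepping W P x y)|) :
    cycleDensity 4 (stepping W P) + ε ^ 4 / 100 <
      cycleDensity 4 (stepping W (fun x => (P x, x ∈ X))) := by
  classical
  obtain ⟨hWm, hWsym, hWmem⟩ := hW
  have hWb : ∀ x y, |W x y| ≤ 1 := fun x y =>
    abs_le.mpr ⟨by linarith [(hWmem x y).1], (hWmem x y).2⟩
  set Qb : UI → Fin k × Bool := fun x => (P x, decide (x ∈ X)) with hQbdef
  -- the Prop-valued refinement has the same stepping as the Bool-valued one
  have hstep_eq : stepping W (fun x => (P x, x ∈ X)) = stepping W Qb := by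
    funext x y
    unfold stepping
    have hfib : ∀ z : UI, (fun w => ((P w, w ∈ X) : Fin k × Prop)) ⁻¹' {(P z, z ∈ X)}
        = Qb ⁻¹' {Qb z} := by
      intro z; ext w
      simp only [Set.mem_preimage, Set.mem_singleton_iff, Prod.mk.injEq, hQbdef]
      constructor
      · rintro ⟨h1, h2⟩
        exact ⟨h1, by rw [decide_eq_decide]; rw [eq_iff_iff] at h2; exact h2⟩
      · rintro ⟨h1, h2⟩
        refine ⟨h1, ?_⟩
        rw [eq_iff_iff]
        rwa [decide_eq_decide] at h2
    rw [hfib x, hfib y]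
  rw [hstep_eq]
  have hcellm : ∀ i : Fin k × Bool, MeasurableSet (Qb ⁻¹' {i}) := by
    rintro ⟨c, b⟩
    have he : Qb ⁻¹' {(c, b)} = P ⁻¹' {c} ∩ (if b = true then X else Xᶜ) := by
      ext z
      cases b <;>
        simp [hQbdef, Prod.ext_iff, decide_eq_true_eq, decide_eq_false_iff_not]
    rw [he]
    cases b
    · exact (hP c).inter (by simpa using hX.compl)
    · exact (hP c).inter (by simpa using hX)
  set m : Fin k × Bool → ℝ := fun i => (volume (Qb ⁻¹' {i})).toReal with hmdef
  set μc : Fin k → ℝ := fun c => (volume (P ⁻¹' {c})).toReal with hμdef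
  set Zs : (Fin k × Bool) → (Fin k × Bool) → ℝ :=
    fun i j => stepAvg W (Qb ⁻¹' {i}) (Qb ⁻¹' {j}) with hZsdef
  set Ms : Fin k → Fin k → ℝ := fun c c' => stepAvg W (P ⁻¹' {c}) (P ⁻¹' {c'}) with hMsdef
  have hm0 : ∀ i, 0 ≤ m i := fun i => ENNReal.toReal_nonneg
  have hsq : ∀ i, Real.sqrt (m i) * Real.sqrt (m i) = m i := fun i => Real.mul_self_sqrt (hm0 i)
  have hfib_split : ∀ c : Fin k, P ⁻¹' {c} = Qb ⁻¹' {(c, true)} ∪ Qb ⁻¹' {(c, false)} := by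
    intro c; ext z
    by_cases hz : z ∈ X <;> simp [hQbdef, Prod.ext_iff, hz]
  have hfib_disj : ∀ (i j : Fin k × Bool), i ≠ j → Disjoint (Qb ⁻¹' {i}) (Qb ⁻¹' {j}) := by
    intro i j hij
    refine Set.disjoint_left.mpr fun z hzi hzj => hij ?_
    simp only [Set.mem_preimage, Set.mem_singleton_iff] at hzi hzj
    rw [← hzi, ← hzj]
  have hμm : ∀ c, μc c = m (c, true) + m (c, false) := by
    intro c
    show (volume (P ⁻¹' {c})).toReal = _
    rw [hfib_split c, measure_union (hfib_disj _ _ (by simp)) (hcellm (c, false)),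
      ENNReal.toReal_add (measure_ne_top _ _) (measure_ne_top _ _)]
  have hμsum : ∀ c, μc c = ∑ i : Fin k × Bool, if i.1 = c then m i else 0 := by
    intro c
    rw [Fintype.sum_prod_type]
    have hcollapse : (∑ c' : Fin k, ∑ b : Bool, if (c', b).1 = c then m (c', b) else 0)
        = ∑ b : Bool, m (c, b) := by
      rw [Finset.sum_eq_single_of_mem c (Finset.mem_univ c)
        (fun c' _ hne => Finset.sum_eq_zero fun b _ => if_neg hne)]
      exact Finset.sum_congr rfl fun b _ => if_pos rfl
    rw [hcollapse, Fintype.sum_bool, hμm c]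
  have hsumm : ∑ i, m i = 1 := sum_cells_vol Qb hcellm
  -- the numerator identity for `Ms`
  have hNform : ∀ c c', Ms c c' =
      (∑ i, ∑ j, if i.1 = c ∧ j.1 = c' then m i * m j * Zs i j else 0) / (μc c * μc c') := by
    intro c c'
    have hnum : ∫ x in P ⁻¹' {c}, ∫ y in P ⁻¹' {c'}, W x y
        = ∑ i, ∑ j, if i.1 = c ∧ j.1 = c' then m i * m j * Zs i j else 0 := by
      have hinner : ∀ x : UI, ∫ y in P ⁻¹' {c'}, W x y
          = (∫ y in Qb ⁻¹' {(c', true)}, W x y) + ∫ y in Qb ⁻¹' {(c', false)}, W x y := by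
        intro x
        rw [hfib_split c']
        exact setIntegral_union (hfib_disj _ _ (by simp)) (hcellm (c', false))
          (intOn W hWm hWb x _) (intOn W hWm hWb x _)
      rw [integral_congr_ae (Filter.Eventually.of_forall hinner),
        integral_add (intOuter W hWm hWb _ _) (intOuter W hWm hWb _ _)]
      have houter : ∀ (b : Bool), ∫ x in P ⁻¹' {c}, ∫ y in Qb ⁻¹' {(c', b)}, W x y
          = (∫ x in Qb ⁻¹' {(c, true)}, ∫ y in Qb ⁻¹' {(c', b)}, W x y)
            + ∫ x in Qb ⁻¹' {(c, false)}, ∫ y in Qb ⁻¹' {(c', b)}, W x y := by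
        intro b
        rw [hfib_split c]
        exact setIntegral_union (hfib_disj _ _ (by simp)) (hcellm (c, false))
          (intOuter W hWm hWb _ _) (intOuter W hWm hWb _ _)
      rw [houter true, houter false]
      have hRHS : (∑ i, ∑ j, if i.1 = c ∧ j.1 = c' then m i * m j * Zs i j else 0)
          = (m (c,true) * m (c',true) * Zs (c,true) (c',true)
              + m (c,true) * m (c',false) * Zs (c,true) (c',false))
            + (m (c,false) * m (c',true) * Zs (c,false) (c',true)
              + m (c,false) * m (c',false) * Zs (c,false) (c',false)) := by
        rw [Fintype.sum_prod_type]
        rw [Finset.sum_eq_single_of_mem c (Finset.mem_univ c)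
          (fun c₁ _ hne => Finset.sum_eq_zero fun b _ => Finset.sum_eq_zero fun j _ =>
            if_neg (fun hh => hne hh.1))]
        rw [Fintype.sum_bool]
        congr 1
        · rw [Fintype.sum_prod_type]
          rw [Finset.sum_eq_single_of_mem c' (Finset.mem_univ c')
            (fun c₂ _ hne => Finset.sum_eq_zero fun b _ => if_neg (fun hh => hne hh.2))]
          rw [Fintype.sum_bool, if_pos ⟨rfl, rfl⟩, if_pos ⟨rfl, rfl⟩]
        · rw [Fintype.sum_prod_type]
          rw [Finset.sum_eq_single_of_mem c' (Finset.mem_univ c')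
            (fun c₂ _ hne => Finset.sum_eq_zero fun b _ => if_neg (fun hh => hne hh.2))]
          rw [Fintype.sum_bool, if_pos ⟨rfl, rfl⟩, if_pos ⟨rfl, rfl⟩]
      rw [hRHS]
      rw [int_eq_stepAvg, int_eq_stepAvg, int_eq_stepAvg, int_eq_stepAvg]
      simp only [hmdef, hZsdef]
      ring
    show stepAvg W (P ⁻¹' {c}) (P ⁻¹' {c'}) = _
    rw [stepAvg, hnum]
  -- matrices
  set Zh : Matrix (Fin k × Bool) (Fin k × Bool) ℝ :=
    Matrix.of (fun i j => Real.sqrt (m i) * Real.sqrt (m j) * Zs i j) with hZh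
  set Pm : Matrix (Fin k × Bool) (Fin k × Bool) ℝ := Pproj Prod.fst m μc with hPmdef
  set fv : Fin k × Bool → ℝ := fun i => if i.2 = true then Real.sqrt (m i) else 0 with hfv
  have hZssymm : ∀ i j, Zs i j = Zs j i := fun i j =>
    stepAvg_symm W hWm hWb hWsym _ _
  have hZht : Zhᵀ = Zh := by
    ext i j
    show Real.sqrt (m j) * Real.sqrt (m i) * Zs j i = Real.sqrt (m i) * Real.sqrt (m j) * Zs i j
    rw [hZssymm j i]; ring
  have hPmt : Pmᵀ = Pm := Pproj_symm _ _ _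
  have hPm2 : Pm * Pm = Pm := Pproj_idem _ _ _ hm0 hμsum
  have hcompress : Pm * Zh * Pm
      = Matrix.of (fun i j => Real.sqrt (m i) * Real.sqrt (m j) * Ms i.1 j.1) :=
    compress_apply Prod.fst m μc Zs Ms hm0 hNform
  -- trace identity for matrices built from sqrt weights
  have htr : ∀ t : (Fin k × Bool) → (Fin k × Bool) → ℝ,
      ((Matrix.of fun i j => Real.sqrt (m i) * Real.sqrt (m j) * t i j)
        * (Matrix.of fun i j => Real.sqrt (m i) * Real.sqrt (m j) * t i j)
        * (Matrix.of fun i j => Real.sqrt (m i) * Real.sqrt (m j) * t i j)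
        * (Matrix.of fun i j => Real.sqrt (m i) * Real.sqrt (m j) * t i j)).trace
      = ∑ i, ∑ j, ∑ p, ∑ q, (m i * m j * m p * m q) * (t i j * t j p * t p q * t q i) := by
    intro t
    rw [trace_mul4_sum]
    refine Finset.sum_congr rfl fun i _ => Finset.sum_congr rfl fun j _ =>
      Finset.sum_congr rfl fun p _ => Finset.sum_congr rfl fun q _ => ?_
    simp only [Matrix.of_apply]
    calc Real.sqrt (m i) * Real.sqrt (m j) * t i j * (Real.sqrt (m j) * Real.sqrt (m p) * t j p)
          * (Real.sqrt (m p) * Real.sqrt (m q) * t p q)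
          * (Real.sqrt (m q) * Real.sqrt (m i) * t q i)
        = (Real.sqrt (m i) * Real.sqrt (m i)) * ((Real.sqrt (m j) * Real.sqrt (m j))
          * ((Real.sqrt (m p) * Real.sqrt (m p)) * ((Real.sqrt (m q) * Real.sqrt (m q))
          * (t i j * t j p * t p q * t q i)))) := by ring
      _ = _ := by rw [hsq i, hsq j, hsq p, hsq q]; ring
  have ht4Q : cycleDensity 4 (stepping W Qb) = (Zh * Zh * Zh * Zh).trace := by
    have h1 : cycleDensity 4 (stepping W Qb) = ∑ i, ∑ j, ∑ p, ∑ q,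
        (m i * m j * m p * m q) * (Zs i j * Zs j p * Zs p q * Zs q i) :=
      cycle4_step Qb hcellm Zs
    rw [h1, hZh, htr Zs]
  have ht4P : cycleDensity 4 (stepping W P)
      = ((Pm * Zh * Pm) * (Pm * Zh * Pm) * (Pm * Zh * Pm) * (Pm * Zh * Pm)).trace := by
    have h1 : cycleDensity 4 (stepping W P) = ∑ i, ∑ j, ∑ p, ∑ q,
        (m i * m j * m p * m q)
          * (Ms i.1 j.1 * Ms j.1 p.1 * Ms p.1 q.1 * Ms q.1 i.1) :=
      cycle4_step Qb hcellm (fun i j => Ms i.1 j.1)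
    have htrMs := htr (fun i j => Ms i.1 j.1)
    rw [h1, hcompress, htrMs]
  -- vector facts
  have hff : fv ⬝ᵥ fv ≤ 1 := by
    rw [← hsumm]
    refine Finset.sum_le_sum fun i _ => ?_
    show (if i.2 = true then Real.sqrt (m i) else 0) * (if i.2 = true then Real.sqrt (m i) else 0)
      ≤ m i
    by_cases h : i.2 = true
    · rw [if_pos h, hsq i]
    · rw [if_neg h, mul_zero]
      exact hm0 i
  -- quadratic forms
  have hquad : ∀ t : (Fin k × Bool) → (Fin k × Bool) → ℝ,
      fv ⬝ᵥ ((Matrix.of fun i j => Real.sqrt (m i) * Real.sqrt (m j) * t i j).mulVec fv)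
      = ∑ c, ∑ c', m (c, true) * m (c', true) * t (c, true) (c', true) := by
    intro t
    rw [dot_mulVec_sum, Fintype.sum_prod_type]
    refine Finset.sum_congr rfl fun c _ => ?_
    rw [Fintype.sum_bool]
    have hfalse : (∑ j, fv (c, false)
        * ((Matrix.of fun i j => Real.sqrt (m i) * Real.sqrt (m j) * t i j) (c, false) j)
        * fv j) = 0 := by
      refine Finset.sum_eq_zero fun j _ => ?_
      show (if (false = true) then _ else 0) * _ * _ = 0
      rw [if_neg (by simp)]
      ring
    rw [hfalse, add_zero, Fintype.sum_prod_type]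
    refine Finset.sum_congr rfl fun c' _ => ?_
    rw [Fintype.sum_bool]
    have hfalse2 : fv (c, true)
        * ((Matrix.of fun i j => Real.sqrt (m i) * Real.sqrt (m j) * t i j) (c, true) (c', false))
        * fv (c', false) = 0 := by
      show _ * _ * (if (false = true) then _ else 0) = 0
      rw [if_neg (by simp)]
      ring
    rw [hfalse2, add_zero]
    show (if (true = true) then Real.sqrt (m (c, true)) else 0)
        * (Real.sqrt (m (c, true)) * Real.sqrt (m (c', true)) * t (c, true) (c', true))
        * (if (true = true) then Real.sqrt (m (c', true)) else 0) = _
    rw [if_pos rfl, if_pos rfl]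
    calc Real.sqrt (m (c, true))
          * (Real.sqrt (m (c, true)) * Real.sqrt (m (c', true)) * t (c, true) (c', true))
          * Real.sqrt (m (c', true))
        = (Real.sqrt (m (c, true)) * Real.sqrt (m (c, true)))
          * ((Real.sqrt (m (c', true)) * Real.sqrt (m (c', true))) * t (c, true) (c', true)) := by
          ring
      _ = _ := by rw [hsq, hsq]; ring
  -- witness computation
  have hXun : X = ⋃ c ∈ (Finset.univ : Finset (Fin k)), Qb ⁻¹' {(c, true)} := by
    ext z
    simp only [Set.mem_iUnion, Finset.mem_univ, exists_prop, true_and, Set.mem_preimage,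
      Set.mem_singleton_iff, hQbdef, Prod.mk.injEq]
    constructor
    · intro hz
      exact ⟨P z, rfl, by simpa using hz⟩
    · rintro ⟨c, _, hc⟩
      simpa using hc
  have hdecompX : ∀ (V : UI → UI → ℝ), Measurable (Function.uncurry V) →
      (∀ x y, |V x y| ≤ 1) →
      ∫ x in X, ∫ y in X, V x y
        = ∑ c, ∑ c', (volume (Qb ⁻¹' {(c, true)})).toReal * (volume (Qb ⁻¹' {(c', true)})).toReal
            * stepAvg V (Qb ⁻¹' {(c, true)}) (Qb ⁻¹' {(c', true)}) := by
    intro V hVm hVb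
    have hinner : ∀ x : UI, ∫ y in X, V x y = ∑ c', ∫ y in Qb ⁻¹' {(c', true)}, V x y := by
      intro x
      conv_lhs => rw [hXun]
      exact integral_biUnion_finset _ (fun c _ => hcellm _)
        (fun c _ c' _ hne => hfib_disj _ _ (by simpa using hne))
        (fun c _ => intOn V hVm hVb x _)
    rw [integral_congr_ae (Filter.Eventually.of_forall hinner),
      integral_finset_sum _ (fun c' _ => intOuter V hVm hVb X _)]
    rw [Finset.sum_comm]
    refine Finset.sum_congr rfl fun c _ => ?_
    conv_lhs => rw [hXun]
    rw [integral_biUnion_finset _ (fun c'' _ => hcellm _)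
      (fun c'' _ c''' _ hne => hfib_disj _ _ (by simpa using hne))
      (fun c'' _ => intOuter V hVm hVb _ _)]
    refine Finset.sum_congr rfl fun c'' _ => ?_
    exact int_eq_stepAvg V _ _
  -- measurability and boundedness of the coarse stepping
  have hPmeas : Measurable P := measurable_to_countable' hP
  have hSPm : Measurable (Function.uncurry (stepping W P)) := by
    have hrw : Function.uncurry (stepping W P)
        = (fun q : Fin k × Fin k => Ms q.1 q.2) ∘ (fun p : UI × UI => (P p.1, P p.2)) := rfl
    rw [hrw]
    exact (measurable_of_countable _).comp
      ((hPmeas.comp measurable_fst).prodMk (hPmeas.comp measurable_snd))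
  have hSPb : ∀ x y, |stepping W P x y| ≤ 1 := fun x y =>
    stepAvg_abs_le_one W hWm hWb _ _
  -- evaluate the witness integrals
  have hWX : ∫ x in X, ∫ y in X, W x y
      = ∑ c, ∑ c', m (c, true) * m (c', true) * Zs (c, true) (c', true) :=
    hdecompX W hWm hWb
  have hSPX : ∫ x in X, ∫ y in X, stepping W P x y
      = ∑ c, ∑ c', m (c, true) * m (c', true) * Ms c c' := by
    rw [hdecompX (stepping W P) hSPm hSPb]
    refine Finset.sum_congr rfl fun c _ => Finset.sum_congr rfl fun c' _ => ?_
    have hconst : ∫ x in Qb ⁻¹' {(c, true)}, ∫ y in Qb ⁻¹' {(c', true)}, stepping W P x y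
        = m (c, true) * m (c', true) * Ms c c' := by
      have hin : ∀ x ∈ Qb ⁻¹' {(c, true)},
          (fun x => ∫ y in Qb ⁻¹' {(c', true)}, stepping W P x y) x
          = m (c', true) * Ms c c' := by
        intro x hx
        have hPx : P x = c := by
          have hq : Qb x = (c, true) := hx
          exact congrArg Prod.fst hq
        have hin2 : ∀ y ∈ Qb ⁻¹' {(c', true)}, stepping W P x y = Ms c c' := by
          intro y hy
          have hPy : P y = c' := by
            have hq : Qb y = (c', true) := hy
            exact congrArg Prod.fst hq
          show stepAvg W (P ⁻¹' {P x}) (P ⁻¹' {P y}) = _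
          rw [hPx, hPy]
        show ∫ y in Qb ⁻¹' {(c', true)}, stepping W P x y = _
        rw [setIntegral_congr_fun (hcellm _) hin2, setIntegral_const, smul_eq_mul, measureReal_def]
      rw [setIntegral_congr_fun (hcellm _) hin, setIntegral_const, smul_eq_mul, measureReal_def]
      ring
    calc (volume (Qb ⁻¹' {(c, true)})).toReal * (volume (Qb ⁻¹' {(c', true)})).toReal
          * stepAvg (stepping W P) (Qb ⁻¹' {(c, true)}) (Qb ⁻¹' {(c', true)})
        = ∫ x in Qb ⁻¹' {(c, true)}, ∫ y in Qb ⁻¹' {(c', true)}, stepping W P x y :=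
          (int_eq_stepAvg (stepping W P) _ _).symm
      _ = m (c, true) * m (c', true) * Ms c c' := hconst
  -- combine everything
  have hsub : ∫ x in X, ∫ y in X, (W x y - stepping W P x y)
      = (∫ x in X, ∫ y in X, W x y) - ∫ x in X, ∫ y in X, stepping W P x y := by
    have h1 : ∀ x : UI, ∫ y in X, (W x y - stepping W P x y)
        = (∫ y in X, W x y) - ∫ y in X, stepping W P x y := fun x =>
      integral_sub (intOn W hWm hWb x X) (intOn _ hSPm hSPb x X)
    rw [integral_congr_ae (Filter.Eventually.of_forall h1)]
    exact integral_sub (intOuter W hWm hWb X X) (intOuter _ hSPm hSPb X X)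
  have hquadMs := hquad (fun i j => Ms i.1 j.1)
  simp only [] at hquadMs
  have hwit2 : ε < |fv ⬝ᵥ (Zh.mulVec fv) - fv ⬝ᵥ ((Pm * Zh * Pm).mulVec fv)| := by
    have heq : fv ⬝ᵥ (Zh.mulVec fv) - fv ⬝ᵥ ((Pm * Zh * Pm).mulVec fv)
        = ∫ x in X, ∫ y in X, (W x y - stepping W P x y) := by
      rw [hcompress, hquadMs, hZh, hquad Zs, hsub, hWX, hSPX]
    rw [heq]
    exact hwitness
  have hcore := core Zh Pm fv hZht hPmt hPm2 hff hε hwit2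
  rw [ht4P, ht4Q]
  exact hcore

end
end
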